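/- arXiv:2005.11430 — 5 statements merged into one kernel-verified Lean document; each statement's English description precedes it below -/
import Mathlib

section
/- Under the standing hypotheses (φ bijective satisfying the q_{n*}-conditions for I and for P ∈ {P₁,P₂}, and 𝔄 satisfying condition (♠): X𝔄P_i = {0} implies X = 0 for i = 1,2), for any A₁₁ ∈ 𝔄₁₁ and B₂₂ ∈ 𝔄₂₂ one has φ(A₁₁ + B₂₂) = φ(A₁₁) + φ(B₂₂). -/
/-- The *-Jordan product `{A,B}_* = AB + BA*`. -/
def jstar {R : Type*} [Ring R] [StarRing R] (A B : R) : R := A * B + B * star A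

/-- The iterated *-Jordan product `q_{n*}(x_1, ..., x_n)`. -/
def qstar {R : Type*} [Ring R] [StarRing R] : List R → R
  | [] => 0
  | x :: xs => xs.foldl jstar x

lemma jstar_zero_right {R : Type*} [Ring R] [StarRing R] (M : R) : jstar M 0 = 0 := by
  simp [jstar]

lemma jstar_zero_left {R : Type*} [Ring R] [StarRing R] (M : R) : jstar 0 M = 0 := by
  simp [jstar]

lemma jstar_add_right {R : Type*} [Ring R] [StarRing R] (M Y Z : R) :
    jstar M (Y + Z) = jstar M Y + jstar M Z := by
  simp only [jstar, mul_add, add_mul]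
  abel

lemma qstar_concat {R : Type*} [Ring R] [StarRing R] (l : List R) (hl : l ≠ []) (Y : R) :
    qstar (l ++ [Y]) = jstar (qstar l) Y := by
  cases l with
  | nil => exact absurd rfl hl
  | cons x xs => simp [qstar, List.foldl_append]

lemma qstar_zero_pair {R : Type*} [Ring R] [StarRing R] (l : List R) (Y : R) :
    qstar (l ++ [0, Y]) = 0 := by
  have h : l ++ [(0 : R), Y] = (l ++ [0]) ++ [Y] := by simp
  rw [h, qstar_concat _ (by simp) Y]
  cases l with
  | nil => simp [qstar, jstar_zero_left]
  | cons x xs =>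
      rw [qstar_concat _ (by simp) 0, jstar_zero_right, jstar_zero_left]

lemma foldl_rep {R : Type*} [Ring R] [StarRing R] (P : R) (hp : P * P = P)
    (hs : star P = P) : ∀ (k m : ℕ),
    List.foldl jstar (m • P) (List.replicate k P) = (m * 2 ^ k) • P
  | 0, m => by simp
  | k + 1, m => by
    rw [List.replicate_succ, List.foldl_cons]
    have h1 : jstar ((m : ℕ) • P) P = ((2 * m : ℕ)) • P := by
      simp only [jstar, smul_mul_assoc, hp, star_nsmul, hs, mul_smul_comm]
      rw [two_mul, add_smul]
    rw [h1, foldl_rep P hp hs k (2 * m)]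
    congr 1
    ring

lemma qstar_rep {R : Type*} [Ring R] [StarRing R] (P X : R) (hp : P * P = P)
    (hs : star P = P) (k : ℕ) :
    qstar (List.replicate k P ++ [P, X]) = (2 ^ k : ℕ) • (P * X + X * P) := by
  have h : List.replicate k P ++ [P, X] = P :: (List.replicate k P ++ [X]) := by
    have : List.replicate k P ++ [P, X] = (List.replicate k P ++ [P]) ++ [X] := by simp
    rw [this, ← List.replicate_succ', List.replicate_succ]
    simp
  rw [h]
  show List.foldl jstar P (List.replicate k P ++ [X]) = _
  rw [List.foldl_append]
  have h2 : List.foldl jstar P (List.replicate k P) = (2 ^ k : ℕ) • P := by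
    have := foldl_rep P hp hs k 1
    simpa using this
  rw [h2]
  simp only [List.foldl_cons, List.foldl_nil, jstar, smul_mul_assoc, star_nsmul, hs,
    mul_smul_comm, smul_add]

theorem stmt3 {𝔄 𝔄' : Type*} [CStarAlgebra 𝔄] [CStarAlgebra 𝔄']
    (n : ℕ) (hn : 2 ≤ n)
    (P₁ : 𝔄) (hproj : P₁ * P₁ = P₁) (hsa : star P₁ = P₁) (hne0 : P₁ ≠ 0) (hne1 : P₁ ≠ 1)
    (φ : 𝔄 → 𝔄') (hbij : Function.Bijective φ) (hunital : φ 1 = 1)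
    (hqI : ∀ A B : 𝔄, φ (qstar (List.replicate (n - 2) 1 ++ [A, B])) =
      qstar (List.replicate (n - 2) (φ 1) ++ [φ A, φ B]))
    (hqP : ∀ P ∈ ({P₁, 1 - P₁} : Set 𝔄), ∀ A B : 𝔄,
      φ (qstar (List.replicate (n - 2) P ++ [A, B])) =
      qstar (List.replicate (n - 2) (φ P) ++ [φ A, φ B]))
    (hspade : ∀ P ∈ ({P₁, 1 - P₁} : Set 𝔄), ∀ X : 𝔄, (∀ A : 𝔄, X * A * P = 0) → X = 0) :
    ∀ A B : 𝔄, P₁ * A * P₁ = A → (1 - P₁) * B * (1 - P₁) = B →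
      φ (A + B) = φ A + φ B := by
  intro A B hA hB
  set P₂ : 𝔄 := 1 - P₁ with hP2
  have hp2proj : P₂ * P₂ = P₂ := by
    simp only [hP2, sub_mul, mul_sub, one_mul, mul_one, hproj]
    abel
  have hs2 : star P₂ = P₂ := by simp [hP2, hsa]
  -- φ 0 = 0
  obtain ⟨Z, hZ⟩ := hbij.surjective 0
  have h0 : φ 0 = 0 := by
    have h := hqI Z 0
    have hL : List.replicate (n - 2) (1 : 𝔄) ++ [Z, 0] =
        (List.replicate (n - 2) (1 : 𝔄) ++ [Z]) ++ [0] := by simp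
    rw [hL, qstar_concat _ (by simp) 0, jstar_zero_right, hZ, qstar_zero_pair] at h
    exact h
  -- choose T with φ T = φ A + φ B
  obtain ⟨T, hT⟩ := hbij.surjective (φ A + φ B)
  -- component facts
  have hP1A : P₁ * A = A := by rw [← hA]; rw [← mul_assoc, ← mul_assoc, hproj]
  have hAP1 : A * P₁ = A := by rw [← hA, mul_assoc (P₁ * A) P₁ P₁, hproj]
  have hP2B : P₂ * B = B := by rw [← hB, ← mul_assoc, ← mul_assoc, hp2proj]
  have hBP2 : B * P₂ = B := by rw [← hB, mul_assoc (P₂ * B) P₂ P₂, hp2proj]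
  have hP1P2 : P₁ * P₂ = 0 := by simp [hP2, mul_sub, hproj]
  have hP2P1 : P₂ * P₁ = 0 := by simp [hP2, sub_mul, hproj]
  have hP1B : P₁ * B = 0 := by rw [← hP2B, ← mul_assoc, hP1P2, zero_mul]
  have hBP1 : B * P₁ = 0 := by rw [← hBP2, mul_assoc, hP2P1, mul_zero]
  have hP2A : P₂ * A = 0 := by rw [← hP1A, ← mul_assoc, hP2P1, zero_mul]
  have hAP2 : A * P₂ = 0 := by rw [← hAP1, mul_assoc, hP1P2, mul_zero]
  -- key: for a projection P in {P₁, P₂}, φ(2^(n-2)•(P*T+T*P)) splits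
  have key : ∀ P ∈ ({P₁, P₂} : Set 𝔄), P * P = P → star P = P →
      φ ((2 ^ (n - 2) : ℕ) • (P * T + T * P)) =
      φ ((2 ^ (n - 2) : ℕ) • (P * A + A * P)) + φ ((2 ^ (n - 2) : ℕ) • (P * B + B * P)) := by
    intro P hmem hpp hps
    have h := hqP P hmem P T
    set l : List 𝔄' := List.replicate (n - 2) (φ P) ++ [φ P] with hl
    have hlne : l ≠ [] := by simp [hl]
    have hsplit : ∀ X : 𝔄', List.replicate (n - 2) (φ P) ++ [φ P, X] = l ++ [X] := by
      intro X; simp [hl]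
    rw [hsplit, qstar_concat l hlne, hT, jstar_add_right, ← qstar_concat l hlne,
      ← qstar_concat l hlne, ← hsplit, ← hsplit, ← hqP P hmem P A, ← hqP P hmem P B,
      qstar_rep P T hpp hps, qstar_rep P A hpp hps, qstar_rep P B hpp hps] at h
    exact h
  set c : ℕ := 2 ^ (n - 2) with hc
  have hcC : ((c : ℂ)) ≠ 0 := by
    simp [hc]
  have cancel : ∀ X Y : 𝔄, c • X = c • Y → X = Y := by
    intro X Y hXY
    have h2 : (c : ℂ) • X = (c : ℂ) • Y := by
      rw [Nat.cast_smul_eq_nsmul, Nat.cast_smul_eq_nsmul]; exact hXY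
    exact smul_right_injective 𝔄 hcC h2
  have key1 : P₁ * T + T * P₁ = A + A := by
    have h := key P₁ (Or.inl rfl) hproj hsa
    rw [hP1A, hAP1, hP1B, hBP1, add_zero, smul_zero, h0, add_zero] at h
    exact cancel _ _ (hbij.injective h)
  have key2 : P₂ * T + T * P₂ = B + B := by
    have h := key P₂ (Or.inr rfl) hp2proj hs2
    rw [hP2A, hAP2, hP2B, hBP2, add_zero, smul_zero, h0, zero_add] at h
    exact cancel _ _ (hbij.injective h)
  have hTeq : T = A + B := by
    have hsum : (P₁ + P₂) * T + T * (P₁ + P₂) = (A + B) + (A + B) := by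
      rw [add_mul, mul_add]
      calc P₁ * T + P₂ * T + (T * P₁ + T * P₂)
          = (P₁ * T + T * P₁) + (P₂ * T + T * P₂) := by abel
        _ = (A + A) + (B + B) := by rw [key1, key2]
        _ = (A + B) + (A + B) := by abel
    have h12 : P₁ + P₂ = 1 := by simp [hP2]
    rw [h12, one_mul, mul_one] at hsum
    have : (2 : ℂ) • T = (2 : ℂ) • (A + B) := by
      rw [two_smul, two_smul]; exact hsum
    exact smul_right_injective 𝔄 two_ne_zero this
  rw [← hTeq, hT]
end

section
/- Under the standing hypotheses including condition (♠), for any A₁₂ ∈ 𝔄₁₂ and B₂₁ ∈ 𝔄₂₁ one has φ(A₁₂ + B₂₁) = φ(A₁₂) + φ(B₂₁). -/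
lemma foldl_jstar_one {R : Type*} [Ring R] [StarRing R] :
    ∀ (m : ℕ) (y : R), star y = y → (List.replicate m (1:R)).foldl jstar y = 2^m • y := by
  intro m
  induction m with
  | zero => intro y _; simp
  | succ m ih =>
    intro y hy
    rw [List.replicate_succ, List.foldl_cons]
    have h1 : jstar y 1 = y + y := by simp [jstar, hy]
    rw [h1, ih (y + y) (by rw [star_add, hy])]
    rw [pow_succ, smul_add, mul_nsmul, two_nsmul]

lemma qstar_formula {R : Type*} [Ring R] [StarRing R] (m : ℕ) (X C : R) :
    qstar (List.replicate m (1:R) ++ [X, C]) = 2^m • jstar X C := by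
  cases m with
  | zero => simp [qstar]
  | succ m =>
    rw [List.replicate_succ, List.cons_append]
    show (List.replicate m (1:R) ++ [X, C]).foldl jstar 1 = _
    rw [List.foldl_append, foldl_jstar_one m 1 (star_one R)]
    show jstar (jstar (2^m • (1:R)) X) C = _
    have h1 : jstar (2^m • (1:R)) X = 2^(m+1) • X := by
      simp only [jstar, smul_mul_assoc, one_mul, star_nsmul, star_one, mul_smul_comm, mul_one,
        pow_succ, mul_nsmul, two_nsmul]
    rw [h1]
    simp only [jstar, smul_mul_assoc, star_nsmul, mul_smul_comm, smul_add]

lemma nsmul_cancel {𝔄 : Type*} [CStarAlgebra 𝔄] {k : ℕ} (hk : k ≠ 0) {x y : 𝔄}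
    (h : k • x = k • y) : x = y := by
  have h2 : (k : ℂ) • x = (k : ℂ) • y := by
    rw [Nat.cast_smul_eq_nsmul, Nat.cast_smul_eq_nsmul]; exact h
  exact smul_right_injective 𝔄 (by exact_mod_cast hk) h2

lemma two_cancel {𝔄 : Type*} [CStarAlgebra 𝔄] {x y : 𝔄} (h : x + x = y + y) : x = y := by
  have h2 : (2 : ℂ) • x = (2 : ℂ) • y := by rw [two_smul, two_smul]; exact h
  exact smul_right_injective 𝔄 two_ne_zero h2

theorem stmt4 {𝔄 𝔄' : Type*} [CStarAlgebra 𝔄] [CStarAlgebra 𝔄']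
    (n : ℕ) (hn : 2 ≤ n)
    (P₁ : 𝔄) (hproj : P₁ * P₁ = P₁) (hsa : star P₁ = P₁) (hne0 : P₁ ≠ 0) (hne1 : P₁ ≠ 1)
    (φ : 𝔄 → 𝔄') (hbij : Function.Bijective φ) (hunital : φ 1 = 1)
    (hqI : ∀ A B : 𝔄, φ (qstar (List.replicate (n - 2) 1 ++ [A, B])) =
      qstar (List.replicate (n - 2) (φ 1) ++ [φ A, φ B]))
    (hqP : ∀ P ∈ ({P₁, 1 - P₁} : Set 𝔄), ∀ A B : 𝔄,
      φ (qstar (List.replicate (n - 2) P ++ [A, B])) =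
      qstar (List.replicate (n - 2) (φ P) ++ [φ A, φ B]))
    (hspade : ∀ P ∈ ({P₁, 1 - P₁} : Set 𝔄), ∀ X : 𝔄, (∀ A : 𝔄, X * A * P = 0) → X = 0) :
    ∀ A B : 𝔄, P₁ * A * (1 - P₁) = A → (1 - P₁) * B * P₁ = B →
      φ (A + B) = φ A + φ B := by
  intro A B hA hB
  set k : ℕ := 2 ^ (n - 2) with hk
  have hkne : k ≠ 0 := pow_ne_zero _ two_ne_zero
  -- projection basics
  have hP2P1 : (1 - P₁) * P₁ = 0 := by rw [sub_mul, one_mul, hproj, sub_self]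
  have hP1P2 : P₁ * (1 - P₁) = 0 := by rw [mul_sub, mul_one, hproj, sub_self]
  have hP2proj : (1 - P₁) * (1 - P₁) = 1 - P₁ := by rw [mul_sub, mul_one, hP2P1, sub_zero]
  have hsP2 : star (1 - P₁) = 1 - P₁ := by rw [star_sub, star_one, hsa]
  -- products with A
  have hP1A : P₁ * A = A := by
    conv_lhs => rw [← hA]
    rw [show P₁ * (P₁ * A * (1 - P₁)) = (P₁ * P₁) * A * (1 - P₁) by
      simp only [mul_assoc], hproj, hA]
  have hAP2 : A * (1 - P₁) = A := by
    conv_lhs => rw [← hA]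
    rw [mul_assoc, hP2proj, hA]
  have hAP1 : A * P₁ = 0 := by
    conv_lhs => rw [← hA]
    rw [mul_assoc, hP2P1, mul_zero]
  have hP2A : (1 - P₁) * A = 0 := by
    conv_lhs => rw [← hA]
    rw [← mul_assoc, ← mul_assoc, hP2P1, zero_mul, zero_mul]
  -- products with B
  have hP2B : (1 - P₁) * B = B := by
    conv_lhs => rw [← hB]
    rw [show (1 - P₁) * ((1 - P₁) * B * P₁) = ((1 - P₁) * (1 - P₁)) * B * P₁ by
      simp only [mul_assoc], hP2proj, hB]
  have hBP1 : B * P₁ = B := by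
    conv_lhs => rw [← hB]
    rw [mul_assoc, hproj, hB]
  have hBP2 : B * (1 - P₁) = 0 := by
    conv_lhs => rw [← hB]
    rw [mul_assoc, hP1P2, mul_zero]
  have hP1B : P₁ * B = 0 := by
    conv_lhs => rw [← hB]
    rw [← mul_assoc, ← mul_assoc, hP1P2, zero_mul, zero_mul]
  -- products with stars
  have hP1sA : P₁ * star A = 0 := by
    have h := congrArg star hAP1
    rwa [star_mul, hsa, star_zero] at h
  have hsAP1 : star A * P₁ = star A := by
    have h := congrArg star hP1A
    rwa [star_mul, hsa] at h
  have hP2sA : (1 - P₁) * star A = star A := by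
    have h := congrArg star hAP2
    rwa [star_mul, hsP2] at h
  have hsBP1 : star B * P₁ = 0 := by
    have h := congrArg star hP1B
    rwa [star_mul, hsa, star_zero] at h
  have hP1sB : P₁ * star B = star B := by
    have h := congrArg star hBP1
    rwa [star_mul, hsa] at h
  have hP2sB : (1 - P₁) * star B = 0 := by
    have h := congrArg star hBP2
    rwa [star_mul, hsP2, star_zero] at h
  have hsBP2 : star B * (1 - P₁) = star B := by
    have h := congrArg star hP2B
    rwa [star_mul, hsP2] at h
  -- the key functional identity
  have H : ∀ X C : 𝔄, φ (k • (X * C + C * star X)) = k • (φ X * φ C + φ C * star (φ X)) := by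
    intro X C
    have h := hqI X C
    rw [hunital, qstar_formula, qstar_formula] at h
    simpa [jstar, hk] using h
  have hinj := hbij.injective
  obtain ⟨T, hT⟩ := hbij.surjective (φ A + φ B)
  -- φ 0 = 0
  obtain ⟨Z, hZ⟩ := hbij.surjective 0
  have hphi0 : φ 0 = 0 := by
    have h := H 0 Z
    simpa [hZ] using h
  -- sum rules
  have sumr : ∀ C : 𝔄, φ (k • (T * C + C * star T)) =
      φ (k • (A * C + C * star A)) + φ (k • (B * C + C * star B)) := by
    intro C
    rw [H, H, H, hT, star_add]
    simp only [add_mul, mul_add, smul_add]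
    abel
  have suml : ∀ C : 𝔄, φ (k • (C * T + T * star C)) =
      φ (k • (C * A + A * star C)) + φ (k • (C * B + B * star C)) := by
    intro C
    rw [H, H, H, hT]
    simp only [add_mul, mul_add, smul_add]
    abel
  -- E1 : T P₁ + P₁ T* = B + B*
  have e1 : T * P₁ + P₁ * star T = B + star B := by
    have h := sumr P₁
    rw [show A * P₁ + P₁ * star A = 0 by rw [hAP1, hP1sA, add_zero],
        show B * P₁ + P₁ * star B = B + star B by rw [hBP1, hP1sB]] at h
    rw [smul_zero, hphi0, zero_add] at h
    exact nsmul_cancel hkne (hinj h)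
  -- E2 : T P₂ + P₂ T* = A + A*
  have e2 : T * (1 - P₁) + (1 - P₁) * star T = A + star A := by
    have h := sumr (1 - P₁)
    rw [show B * (1 - P₁) + (1 - P₁) * star B = 0 by rw [hBP2, hP2sB, add_zero],
        show A * (1 - P₁) + (1 - P₁) * star A = A + star A by rw [hAP2, hP2sA]] at h
    rw [smul_zero, hphi0, add_zero] at h
    exact nsmul_cancel hkne (hinj h)
  -- C1, C2 : the reversed relations
  have c1 : φ (k • (P₁ * T + T * P₁)) = φ (k • A) + φ (k • B) := by
    have h := suml P₁
    rw [hsa,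
        show P₁ * A + A * P₁ = A by rw [hP1A, hAP1, add_zero],
        show P₁ * B + B * P₁ = B by rw [hP1B, hBP1, zero_add]] at h
    exact h
  have c2 : φ (k • ((1 - P₁) * T + T * (1 - P₁))) = φ (k • A) + φ (k • B) := by
    have h := suml (1 - P₁)
    rw [hsP2,
        show (1 - P₁) * A + A * (1 - P₁) = A by rw [hP2A, hAP2, zero_add],
        show (1 - P₁) * B + B * (1 - P₁) = B by rw [hP2B, hBP2, add_zero]] at h
    exact h
  have hdiag : P₁ * T + T * P₁ = (1 - P₁) * T + T * (1 - P₁) :=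
    nsmul_cancel hkne (hinj (c1.trans c2.symm))
  -- P₁ T + T P₁ = T
  have hW : P₁ * T + T * P₁ = T := by
    have h := hdiag
    rw [sub_mul, one_mul, mul_sub, mul_one] at h
    apply two_cancel
    nth_rewrite 1 [h]
    abel
  -- primed rewriting helpers
  have hproj' : ∀ x : 𝔄, P₁ * (P₁ * x) = P₁ * x := fun x => by rw [← mul_assoc, hproj]
  have hP2proj' : ∀ x : 𝔄, (1 - P₁) * ((1 - P₁) * x) = (1 - P₁) * x := fun x => by
    rw [← mul_assoc, hP2proj]
  have hP1P2' : ∀ x : 𝔄, P₁ * ((1 - P₁) * x) = 0 := fun x => by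
    rw [← mul_assoc, hP1P2, zero_mul]
  have hP2P1' : ∀ x : 𝔄, (1 - P₁) * (P₁ * x) = 0 := fun x => by
    rw [← mul_assoc, hP2P1, zero_mul]
  have hP1sA' : ∀ x : 𝔄, P₁ * (star A * x) = 0 := fun x => by
    rw [← mul_assoc, hP1sA, zero_mul]
  have hP2sB' : ∀ x : 𝔄, (1 - P₁) * (star B * x) = 0 := fun x => by
    rw [← mul_assoc, hP2sB, zero_mul]
  -- diagonal corners vanish
  have hT11 : P₁ * (T * P₁) = 0 := by
    have h := congrArg (fun x => P₁ * (x * P₁)) hW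
    simp only [mul_add, add_mul, mul_assoc, hproj, hproj'] at h
    rwa [add_eq_left] at h
  have hT22 : (1 - P₁) * (T * (1 - P₁)) = 0 := by
    have h := congrArg (fun x => (1 - P₁) * (x * (1 - P₁))) hW
    simp only [mul_add, add_mul, mul_assoc, hP2P1', hP1P2, mul_zero, zero_mul, add_zero,
      zero_add] at h
    exact h.symm
  -- off-diagonal corners
  have hT21 : (1 - P₁) * (T * P₁) = B := by
    have h := congrArg (fun x => (1 - P₁) * (x * P₁)) e1
    simp only [mul_add, add_mul, mul_assoc, hproj, hP2P1', hsBP1, hBP1, hP2B, mul_zero,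
      zero_mul, add_zero, zero_add] at h
    exact h
  have hT12 : P₁ * (T * (1 - P₁)) = A := by
    have h := congrArg (fun x => P₁ * (x * (1 - P₁))) e2
    simp only [mul_add, add_mul, mul_assoc, hP2proj, hP1P2', hP1sA', hAP2, hP1A, mul_zero,
      zero_mul, add_zero, zero_add] at h
    exact h
  -- assemble
  have hTsum : T = A + B := by
    have hdec : T = P₁ * (T * P₁) + P₁ * (T * (1 - P₁)) + (1 - P₁) * (T * P₁) +
        (1 - P₁) * (T * (1 - P₁)) := by noncomm_ring
    rw [hdec, hT11, hT12, hT21, hT22, zero_add, add_zero]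
  rw [← hTsum, hT]
end

section
/- Under the standing hypotheses including (♠), for any A₁₁ ∈ 𝔄₁₁, B₁₂ ∈ 𝔄₁₂, C₂₁ ∈ 𝔄₂₁ one has φ(A₁₁ + B₁₂ + C₂₁) = φ(A₁₁) + φ(B₁₂) + φ(C₂₁); similarly φ(B₁₂ + C₂₁ + D₂₂) = φ(B₁₂) + φ(C₂₁) + φ(D₂₂) for D₂₂ ∈ 𝔄₂₂. -/
section aux

variable {R : Type*} [Ring R] [StarRing R]

private lemma pf_smul_mul (c : ℕ) (x y : R) : (c • x) * y = c • (x * y) := by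
  rw [nsmul_eq_mul, nsmul_eq_mul, mul_assoc]

private lemma pf_mul_smul (c : ℕ) (x y : R) : x * (c • y) = c • (x * y) := by
  rw [nsmul_eq_mul, nsmul_eq_mul, ← mul_assoc, ← (Nat.cast_commute c x).eq, mul_assoc]

private lemma pf_star_smul (c : ℕ) (x : R) : star (c • x) = c • star x := by
  rw [nsmul_eq_mul, nsmul_eq_mul, star_mul, star_natCast, ← (Nat.cast_commute c (star x)).eq]

private lemma pf_smul_add {M : Type*} [AddCommMonoid M] (c : ℕ) (x y : M) :
    c • (x + y) = c • x + c • y := by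
  induction c with
  | zero => simp
  | succ k ih =>
    simp only [succ_nsmul, ih]
    abel

private lemma jstar_nsmul_one (k : ℕ) (X : R) :
    jstar ((2 ^ k : ℕ) • (1 : R)) X = (2 ^ (k + 1) : ℕ) • X := by
  rw [pow_succ, mul_two, add_nsmul]
  simp only [jstar, pf_smul_mul, pf_mul_smul, pf_star_smul, star_one, mul_one, one_mul]

private lemma jstar_nsmul_left (c : ℕ) (X Y : R) : jstar (c • X) Y = c • jstar X Y := by
  simp only [jstar, pf_smul_mul, pf_mul_smul, pf_star_smul, pf_smul_add]

private lemma foldl_jstar_ones (X Y : R) :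
    ∀ (m k : ℕ), List.foldl jstar ((2 ^ k : ℕ) • (1 : R)) (List.replicate m 1 ++ [X, Y]) =
      (2 ^ (k + m + 1) : ℕ) • jstar X Y := by
  intro m
  induction m with
  | zero =>
    intro k
    simp only [List.replicate, List.nil_append, List.foldl]
    rw [jstar_nsmul_one, jstar_nsmul_left]
  | succ m ih =>
    intro k
    rw [show List.replicate (m + 1) (1 : R) ++ [X, Y] = 1 :: (List.replicate m 1 ++ [X, Y]) from
      by simp [List.replicate_succ]]
    rw [List.foldl_cons, jstar_nsmul_one, ih (k + 1)]
    have : k + 1 + m + 1 = k + (m + 1) + 1 := by omega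
    rw [this]

private lemma qform (m : ℕ) (X Y : R) :
    qstar (List.replicate m (1 : R) ++ [X, Y]) = (2 ^ m : ℕ) • jstar X Y := by
  cases m with
  | zero => simp [qstar]
  | succ m =>
    rw [show List.replicate (m + 1) (1 : R) ++ [X, Y] = 1 :: (List.replicate m 1 ++ [X, Y]) from
      by simp [List.replicate_succ]]
    show List.foldl jstar 1 (List.replicate m 1 ++ [X, Y]) = _
    have h := foldl_jstar_ones X Y m 0
    simpa using h

private lemma corner_left {e f X : R} (he : e * e = e) (h : e * X * f = X) : e * X = X := by
  conv_lhs => rw [← h]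
  rw [← mul_assoc, ← mul_assoc, he, h]

private lemma corner_right {e f X : R} (hf : f * f = f) (h : e * X * f = X) : X * f = X := by
  conv_lhs => rw [← h]
  rw [mul_assoc, hf, h]

private lemma corner_zleft {e f X g : R} (h : e * X * f = X) (hge : g * e = 0) : g * X = 0 := by
  conv_lhs => rw [← h]
  rw [← mul_assoc, ← mul_assoc, hge, zero_mul, zero_mul]

private lemma corner_zright {e f X g : R} (h : e * X * f = X) (hfg : f * g = 0) : X * g = 0 := by
  conv_lhs => rw [← h]
  rw [mul_assoc, hfg, mul_zero]

end aux

private lemma main_lemma {𝔄 𝔄' : Type*} [CStarAlgebra 𝔄] [CStarAlgebra 𝔄'] (m : ℕ)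
    (P : 𝔄) (hproj : P * P = P) (hsa : star P = P)
    (φ : 𝔄 → 𝔄') (hbij : Function.Bijective φ)
    (key : ∀ X Y : 𝔄, φ ((2 ^ m : ℕ) • jstar X Y) = (2 ^ m : ℕ) • jstar (φ X) (φ Y))
    (A B C : 𝔄) (hA : P * A * P = A) (hB : P * B * (1 - P) = B) (hC : (1 - P) * C * P = C) :
    φ (A + B + C) = φ A + φ B + φ C := by
  obtain ⟨φinj, φsurj⟩ := hbij
  -- cancellation of the scalar 2^m
  have hcan : ∀ x y : 𝔄, (2 ^ m : ℕ) • x = (2 ^ m : ℕ) • y → x = y := by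
    intro x y h
    have hne : ((2 ^ m : ℕ) : ℂ) ≠ 0 := by
      exact_mod_cast (pow_ne_zero m (two_ne_zero))
    have h2 : ((2 ^ m : ℕ) : ℂ) • x = ((2 ^ m : ℕ) : ℂ) • y := by
      rw [Nat.cast_smul_eq_nsmul, Nat.cast_smul_eq_nsmul]; exact h
    have h3 := congrArg (fun z => (((2 ^ m : ℕ) : ℂ))⁻¹ • z) h2
    simpa [smul_smul, inv_mul_cancel₀ hne] using h3
  -- cancellation of 2 (from x + x = y + y)
  have hplus : ∀ x y : 𝔄, x + x = y + y → x = y := by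
    intro x y h
    have h2 : (2 : ℂ) • x = (2 : ℂ) • y := by
      rw [two_smul, two_smul]; exact h
    have h3 := congrArg (fun z => (2 : ℂ)⁻¹ • z) h2
    simpa [smul_smul, inv_mul_cancel₀ (by norm_num : (2 : ℂ) ≠ 0)] using h3
  -- φ 0 = 0
  have hphi0 : φ 0 = 0 := by
    obtain ⟨Z, hZ⟩ := φsurj 0
    have e := key 0 Z
    rw [hZ] at e
    simpa [jstar] using e
  -- basic projection facts
  have hPQ : P * (1 - P) = 0 := by
    calc P * (1 - P) = P - P * P := by noncomm_ring
    _ = 0 := by rw [hproj]; abel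
  have hQP : (1 - P) * P = 0 := by
    calc (1 - P) * P = P - P * P := by noncomm_ring
    _ = 0 := by rw [hproj]; abel
  have hQQ : ((1 : 𝔄) - P) * (1 - P) = 1 - P := by
    calc ((1 : 𝔄) - P) * (1 - P) = 1 - P - P + P * P := by noncomm_ring
    _ = 1 - P := by rw [hproj]; abel
  have hsQ : star ((1 : 𝔄) - P) = 1 - P := by simp [hsa]
  have hsX : star (P + P - 1 : 𝔄) = P + P - 1 := by simp [hsa]
  -- Claim 2 : additivity on off-diagonal pairs
  have claim2 : ∀ B C : 𝔄, P * B * (1 - P) = B → (1 - P) * C * P = C →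
      φ (B + C) = φ B + φ C := by
    intro B C hB hC
    have hPB : P * B = B := corner_left hproj hB
    have hBQ : B * (1 - P) = B := corner_right hQQ hB
    have hBP : B * P = 0 := corner_zright hB hQP
    have hQB : (1 - P) * B = 0 := corner_zleft hB hQP
    have hQC : (1 - P) * C = C := corner_left hQQ hC
    have hCP : C * P = C := corner_right hproj hC
    have hPC : P * C = 0 := corner_zleft hC hPQ
    have hCQ : C * (1 - P) = 0 := corner_zright hC hPQ
    have hPsB : P * star B = 0 := by
      simpa [star_mul, hsa] using congrArg star hBP
    have hQsB : ((1 : 𝔄) - P) * star B = star B := by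
      simpa [star_mul, star_sub, star_one, hsa] using congrArg star hBQ
    have hPsC : P * star C = star C := by
      simpa [star_mul, hsa] using congrArg star hCP
    have hQsC : ((1 : 𝔄) - P) * star C = 0 := by
      simpa [star_mul, star_sub, star_one, hsa] using congrArg star hCQ
    obtain ⟨T, hT⟩ := φsurj (φ B + φ C)
    -- Test A : first slot P + P - 1
    have jAB : jstar (P + P - 1) B = 0 := by
      simp only [jstar, hsX]
      calc (P + P - 1) * B + B * (P + P - 1)
          = (P * B + P * B - B) + (B * P + B * P - B) := by noncomm_ring
      _ = (B + B - B) + (0 + 0 - B) := by rw [hPB, hBP]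
      _ = 0 := by abel
    have jAC : jstar (P + P - 1) C = 0 := by
      simp only [jstar, hsX]
      calc (P + P - 1) * C + C * (P + P - 1)
          = (P * C + P * C - C) + (C * P + C * P - C) := by noncomm_ring
      _ = (0 + 0 - C) + (C + C - C) := by rw [hPC, hCP]
      _ = 0 := by abel
    have eA := key (P + P - 1) T
    rw [hT] at eA
    have splitA : jstar (φ (P + P - 1)) (φ B + φ C) =
        jstar (φ (P + P - 1)) (φ B) + jstar (φ (P + P - 1)) (φ C) := by
      simp only [jstar, mul_add, add_mul]; abel
    rw [splitA, pf_smul_add, ← key (P + P - 1) B, ← key (P + P - 1) C] at eA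
    rw [jAB, jAC, smul_zero, hphi0, add_zero] at eA
    have f1 : jstar (P + P - 1) T = 0 := by
      have h := φinj (eA.trans hphi0.symm)
      exact hcan _ 0 (by simpa using h)
    simp only [jstar, hsX] at f1
    have h1 : P * T + T * P = T := by
      apply hplus
      calc (P * T + T * P) + (P * T + T * P)
          = ((P + P - 1) * T + T * (P + P - 1)) + (T + T) := by noncomm_ring
      _ = 0 + (T + T) := by rw [f1]
      _ = T + T := by abel
    -- Test B : second slot P
    have jBP : jstar B P = 0 := by
      simp only [jstar]
      rw [hBP, hPsB, add_zero]
    have jCP : jstar C P = C + star C := by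
      simp only [jstar]
      rw [hCP, hPsC]
    have eB := key T P
    rw [hT] at eB
    have splitB : jstar (φ B + φ C) (φ P) = jstar (φ B) (φ P) + jstar (φ C) (φ P) := by
      simp only [jstar, add_mul, star_add, mul_add]; abel
    rw [splitB, pf_smul_add, ← key B P, ← key C P] at eB
    rw [jBP, jCP, smul_zero, hphi0, zero_add] at eB
    have h2 : T * P + P * star T = C + star C := by
      have h := hcan _ _ (φinj eB)
      simpa [jstar] using h
    -- Test C : second slot 1 - P
    have jBQ : jstar B (1 - P) = B + star B := by
      simp only [jstar]
      rw [hBQ, hQsB]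
    have jCQ : jstar C (1 - P) = 0 := by
      simp only [jstar]
      rw [hCQ, hQsC, add_zero]
    have eC := key T (1 - P)
    rw [hT] at eC
    have splitC : jstar (φ B + φ C) (φ (1 - P)) =
        jstar (φ B) (φ (1 - P)) + jstar (φ C) (φ (1 - P)) := by
      simp only [jstar, add_mul, star_add, mul_add]; abel
    rw [splitC, pf_smul_add, ← key B (1 - P), ← key C (1 - P)] at eC
    rw [jBQ, jCQ, smul_zero, hphi0, add_zero] at eC
    have h3 : T * (1 - P) + (1 - P) * star T = B + star B := by
      have h := hcan _ _ (φinj eC)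
      simpa [jstar] using h
    -- derive T * P = C
    have hPTP : P * (T * P) = 0 := by
      have h : (P * T + T * P) * P = T * P := by rw [h1]
      calc P * (T * P) = (P * T + T * P) * P - T * (P * P) := by noncomm_ring
      _ = T * P - T * P := by rw [h, hproj]
      _ = 0 := sub_self _
    have hTP : T * P = C := by
      have h2' : P * star T = (C + star C) - T * P := by
        rw [← h2]; abel
      have hskew : star (T * P - C) = -(T * P - C) := by
        rw [star_sub, star_mul, hsa, h2']
        abel
      have hPS : P * (T * P - C) = 0 := by
        rw [mul_sub, hPTP, hPC]; simp
      have hSP : (T * P - C) * P = T * P - C := by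
        rw [sub_mul, mul_assoc, hproj, hCP]
      have h5 : star (T * P - C) = P * star (T * P - C) := by
        conv_lhs => rw [← hSP]
        rw [star_mul, hsa]
      rw [hskew, mul_neg] at h5
      have h6 : T * P - C = P * (T * P - C) := by
        have := congrArg Neg.neg h5
        simpa using this
      rw [hPS] at h6
      exact sub_eq_zero.mp h6
    -- derive T * (1 - P) = B
    have hTPQ : (T * P) * (1 - P) = 0 := by
      rw [mul_assoc, hPQ, mul_zero]
    have hPW : P * (T * (1 - P)) = T * (1 - P) := by
      calc P * (T * (1 - P)) = (P * T + T * P) * (1 - P) - (T * P) * (1 - P) := by noncomm_ring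
      _ = T * (1 - P) - 0 := by rw [h1, hTPQ]
      _ = T * (1 - P) := by rw [sub_zero]
    have hTQ : T * (1 - P) = B := by
      have h3' : ((1 : 𝔄) - P) * star T = (B + star B) - T * (1 - P) := by
        rw [← h3]; abel
      have hskew : star (T * (1 - P) - B) = -(T * (1 - P) - B) := by
        rw [star_sub, star_mul, hsQ, h3']
        abel
      have hSP0 : (T * (1 - P) - B) * P = 0 := by
        rw [sub_mul, mul_assoc, hQP, mul_zero, hBP]; simp
      have hPS' : P * (T * (1 - P) - B) = T * (1 - P) - B := by
        rw [mul_sub, hPW, hPB]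
      have h7 : P * star (T * (1 - P) - B) = 0 := by
        simpa [star_mul, hsa] using congrArg star hSP0
      rw [hskew, mul_neg, neg_eq_zero] at h7
      rw [hPS'] at h7
      exact sub_eq_zero.mp h7
    have hTeq : T = B + C := by
      calc T = T * P + T * (1 - P) := by noncomm_ring
      _ = C + B := by rw [hTP, hTQ]
      _ = B + C := by abel
    rw [← hTeq]
    exact hT
  -- now the main triple
  have hPA : P * A = A := corner_left hproj hA
  have hAP : A * P = A := corner_right hproj hA
  have hQA : (1 - P) * A = 0 := corner_zleft hA hQP
  have hAQ : A * (1 - P) = 0 := corner_zright hA hPQ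
  have hPB : P * B = B := corner_left hproj hB
  have hBQ : B * (1 - P) = B := corner_right hQQ hB
  have hBP : B * P = 0 := corner_zright hB hQP
  have hQB : (1 - P) * B = 0 := corner_zleft hB hQP
  have hQC : (1 - P) * C = C := corner_left hQQ hC
  have hCP : C * P = C := corner_right hproj hC
  have hPC : P * C = 0 := corner_zleft hC hPQ
  have hCQ : C * (1 - P) = 0 := corner_zright hC hPQ
  obtain ⟨T, hT⟩ := φsurj (φ A + φ B + φ C)
  -- Test 1 : first slot P + P - 1
  have j1A : jstar (P + P - 1) A = A + A := by
    simp only [jstar, hsX]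
    calc (P + P - 1) * A + A * (P + P - 1)
        = (P * A + P * A - A) + (A * P + A * P - A) := by noncomm_ring
    _ = (A + A - A) + (A + A - A) := by rw [hPA, hAP]
    _ = A + A := by abel
  have j1B : jstar (P + P - 1) B = 0 := by
    simp only [jstar, hsX]
    calc (P + P - 1) * B + B * (P + P - 1)
        = (P * B + P * B - B) + (B * P + B * P - B) := by noncomm_ring
    _ = (B + B - B) + (0 + 0 - B) := by rw [hPB, hBP]
    _ = 0 := by abel
  have j1C : jstar (P + P - 1) C = 0 := by
    simp only [jstar, hsX]
    calc (P + P - 1) * C + C * (P + P - 1)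
        = (P * C + P * C - C) + (C * P + C * P - C) := by noncomm_ring
    _ = (0 + 0 - C) + (C + C - C) := by rw [hPC, hCP]
    _ = 0 := by abel
  have e1 := key (P + P - 1) T
  rw [hT] at e1
  have split3 : jstar (φ (P + P - 1)) (φ A + φ B + φ C) =
      jstar (φ (P + P - 1)) (φ A) + jstar (φ (P + P - 1)) (φ B) +
        jstar (φ (P + P - 1)) (φ C) := by
    simp only [jstar, mul_add, add_mul]; abel
  rw [split3, pf_smul_add, pf_smul_add, ← key (P + P - 1) A, ← key (P + P - 1) B,
    ← key (P + P - 1) C] at e1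
  rw [j1A, j1B, j1C, smul_zero, hphi0, add_zero, add_zero] at e1
  have g1 : (P + P - 1) * T + T * (P + P - 1) = A + A := by
    have h := hcan _ _ (φinj e1)
    simpa [jstar, hsX] using h
  -- Test 2 : first slot 1 - P
  have j2A : jstar (1 - P) A = 0 := by
    simp only [jstar, hsQ]
    rw [hQA, hAQ, add_zero]
  have j2B : jstar (1 - P) B = B := by
    simp only [jstar, hsQ]
    rw [hQB, hBQ, zero_add]
  have j2C : jstar (1 - P) C = C := by
    simp only [jstar, hsQ]
    rw [hQC, hCQ, add_zero]
  have e2 := key (1 - P) T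
  rw [hT] at e2
  have split3' : jstar (φ (1 - P)) (φ A + φ B + φ C) =
      jstar (φ (1 - P)) (φ A) + jstar (φ (1 - P)) (φ B) + jstar (φ (1 - P)) (φ C) := by
    simp only [jstar, mul_add, add_mul]; abel
  rw [split3', pf_smul_add, pf_smul_add, ← key (1 - P) A, ← key (1 - P) B,
    ← key (1 - P) C] at e2
  rw [j2A, j2B, j2C, smul_zero, hphi0, zero_add] at e2
  have hcomb : φ ((2 ^ m : ℕ) • B) + φ ((2 ^ m : ℕ) • C) = φ ((2 ^ m : ℕ) • (B + C)) := by
    rw [pf_smul_add]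
    refine (claim2 _ _ ?_ ?_).symm
    · rw [pf_mul_smul, pf_smul_mul, hB]
    · rw [pf_mul_smul, pf_smul_mul, hC]
  rw [hcomb] at e2
  have g2 : (1 - P) * T + T * (1 - P) = B + C := by
    have h := hcan _ _ (φinj e2)
    simpa [jstar, hsQ] using h
  have hx : T + T = (A + B + C) + (A + B + C) := by
    calc T + T
        = (((P + P - 1) * T + T * (P + P - 1)) + ((1 - P) * T + T * (1 - P))) +
            ((1 - P) * T + T * (1 - P)) := by noncomm_ring
    _ = ((A + A) + (B + C)) + (B + C) := by rw [g1, g2]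
    _ = (A + B + C) + (A + B + C) := by abel
  have hTeq : T = A + B + C := hplus _ _ hx
  rw [← hTeq]
  exact hT

theorem stmt5 {𝔄 𝔄' : Type*} [CStarAlgebra 𝔄] [CStarAlgebra 𝔄']
    (n : ℕ) (hn : 2 ≤ n)
    (P₁ : 𝔄) (hproj : P₁ * P₁ = P₁) (hsa : star P₁ = P₁) (hne0 : P₁ ≠ 0) (hne1 : P₁ ≠ 1)
    (φ : 𝔄 → 𝔄') (hbij : Function.Bijective φ) (hunital : φ 1 = 1)
    (hqI : ∀ A B : 𝔄, φ (qstar (List.replicate (n - 2) 1 ++ [A, B])) =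
      qstar (List.replicate (n - 2) (φ 1) ++ [φ A, φ B]))
    (hqP : ∀ P ∈ ({P₁, 1 - P₁} : Set 𝔄), ∀ A B : 𝔄,
      φ (qstar (List.replicate (n - 2) P ++ [A, B])) =
      qstar (List.replicate (n - 2) (φ P) ++ [φ A, φ B]))
    (hspade : ∀ P ∈ ({P₁, 1 - P₁} : Set 𝔄), ∀ X : 𝔄, (∀ A : 𝔄, X * A * P = 0) → X = 0) :
    (∀ A B C : 𝔄, P₁ * A * P₁ = A → P₁ * B * (1 - P₁) = B → (1 - P₁) * C * P₁ = C →
      φ (A + B + C) = φ A + φ B + φ C) ∧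
    (∀ B C D : 𝔄, P₁ * B * (1 - P₁) = B → (1 - P₁) * C * P₁ = C →
      (1 - P₁) * D * (1 - P₁) = D →
      φ (B + C + D) = φ B + φ C + φ D) := by
  have key : ∀ X Y : 𝔄, φ ((2 ^ (n - 2) : ℕ) • jstar X Y) =
      (2 ^ (n - 2) : ℕ) • jstar (φ X) (φ Y) := by
    intro X Y
    have h := hqI X Y
    rw [hunital] at h
    rw [qform, qform] at h
    exact h
  constructor
  · intro A B C hA hB hC
    exact main_lemma (n - 2) P₁ hproj hsa φ hbij key A B C hA hB hC
  · intro B C D hB hC hD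
    have hproj' : ((1 : 𝔄) - P₁) * (1 - P₁) = 1 - P₁ := by
      calc ((1 : 𝔄) - P₁) * (1 - P₁) = 1 - P₁ - P₁ + P₁ * P₁ := by noncomm_ring
      _ = 1 - P₁ := by rw [hproj]; abel
    have hsa' : star ((1 : 𝔄) - P₁) = 1 - P₁ := by simp [hsa]
    have h1 : (1 : 𝔄) - (1 - P₁) = P₁ := sub_sub_cancel 1 P₁
    have hmain := main_lemma (n - 2) (1 - P₁) hproj' hsa' φ hbij key D C B
      hD (by rw [h1]; exact hC) (by rw [h1]; exact hB)
    calc φ (B + C + D) = φ (D + C + B) := by rw [show B + C + D = D + C + B from by abel]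
    _ = φ D + φ C + φ B := hmain
    _ = φ B + φ C + φ D := by abel
end

section
/- Under the standing hypotheses including (♠), φ is additive on each diagonal Peirce component: for i ∈ {1,2} and A_{ii}, B_{ii} ∈ 𝔄_{ii}, φ(A_{ii} + B_{ii}) = φ(A_{ii}) + φ(B_{ii}). -/
section JordanProduct

variable {R : Type*} [Ring R] [StarRing R]

lemma jstar_add_left (a b c : R) : jstar (a + b) c = jstar a c + jstar b c := by
  simp only [jstar, add_mul, mul_add, star_add]
  abel

lemma jstar_add_right_s8 (a b c : R) : jstar a (b + c) = jstar a b + jstar a c := by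
  simp only [jstar, mul_add, add_mul]
  abel

lemma jstar_nsmul_left_s8 (m : ℕ) (a b : R) : jstar (m • a) b = m • jstar a b := by
  simp only [jstar, smul_mul_assoc, mul_smul_comm, star_nsmul, smul_add]

lemma jstar_one_left (a : R) : jstar 1 a = 2 • a := by
  simp [jstar, two_smul]

lemma foldl_jstar_replicate_one (m : ℕ) {c : R} (hc : IsSelfAdjoint c) :
    (List.replicate m 1).foldl jstar c = 2 ^ m • c := by
  induction m generalizing c with
  | zero => simp
  | succ m ih =>
    have h2c : jstar c 1 = 2 • c := by simp [jstar, hc.star_eq, two_smul]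
    have h2c_sa : IsSelfAdjoint (2 • c) := by rw [IsSelfAdjoint, star_nsmul, hc.star_eq]
    rw [List.replicate_succ, List.foldl_cons, h2c, ih h2c_sa, smul_smul, ← pow_succ]

lemma qstar_replicate_one_append (m : ℕ) (A B : R) :
    qstar (List.replicate m 1 ++ [A, B]) = 2 ^ m • jstar A B := by
  cases m with
  | zero => simp [qstar]
  | succ m =>
    rw [List.replicate_succ, List.cons_append, qstar, List.foldl_append,
      foldl_jstar_replicate_one m (.one R)]
    simp only [List.foldl_cons, List.foldl_nil, jstar_nsmul_left_s8, jstar_one_left, smul_smul,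
      ← pow_succ]

end JordanProduct

section Peirce

variable {R : Type*} [Ring R]

def peirceSpace (e f : R) : AddSubgroup R where
  carrier := {x | e * x = x ∧ x * f = x}
  add_mem' {x y} hx hy := ⟨by rw [mul_add, hx.1, hy.1], by rw [add_mul, hx.2, hy.2]⟩
  zero_mem' := ⟨mul_zero e, zero_mul f⟩
  neg_mem' {x} hx := ⟨by rw [mul_neg, hx.1], by rw [neg_mul, hx.2]⟩

variable {e f g x y : R}

lemma mul_eq_of_mem_peirceSpace_left (hx : x ∈ peirceSpace e f) : e * x = x := hx.1

lemma mul_eq_of_mem_peirceSpace_right (hx : x ∈ peirceSpace e f) : x * f = x := hx.2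

lemma mul_mul_eq_of_mem_peirceSpace (hx : x ∈ peirceSpace e f) : e * x * f = x := by
  rw [hx.1, hx.2]

lemma mem_peirceSpace_iff (he : IsIdempotentElem e) (hf : IsIdempotentElem f) :
    x ∈ peirceSpace e f ↔ e * x * f = x := by
  refine ⟨mul_mul_eq_of_mem_peirceSpace, fun hx => ⟨?_, ?_⟩⟩
  · rw [← hx, ← mul_assoc, ← mul_assoc, he.eq]
  · rw [← hx, mul_assoc, hf.eq]

lemma mul_mul_mem_peirceSpace (he : IsIdempotentElem e) (hf : IsIdempotentElem f) (x : R) :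
    e * x * f ∈ peirceSpace e f := by
  rw [mem_peirceSpace_iff he hf, ← mul_assoc, ← mul_assoc, he.eq, mul_assoc, hf.eq]

lemma mul_mem_peirceSpace (hx : x ∈ peirceSpace e f) (hy : y ∈ peirceSpace f g) :
    x * y ∈ peirceSpace e g :=
  ⟨by rw [← mul_assoc, hx.1], by rw [mul_assoc, hy.2]⟩

lemma star_mem_peirceSpace [StarRing R] (he : IsSelfAdjoint e) (hf : IsSelfAdjoint f)
    (hx : x ∈ peirceSpace e f) : star x ∈ peirceSpace f e :=
  ⟨by rw [← hf.star_eq, ← star_mul, hx.2], by rw [← he.star_eq, ← star_mul, hx.1]⟩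

end Peirce

/-- Condition (♠) for the projection `e`. -/
def IsLeftSeparating {R : Type*} [Ring R] (e : R) : Prop :=
  ∀ X : R, (∀ A : R, X * A * e = 0) → X = 0

structure IsComplementaryProj {R : Type*} [Ring R] [StarRing R] (p q : R) : Prop where
  isStarProjection : IsStarProjection p
  add_eq_one : p + q = 1

namespace IsComplementaryProj

variable {R : Type*} [Ring R] [StarRing R] {p q e f x y z D X S T : R}

lemma one_sub (hp : IsStarProjection p) : IsComplementaryProj p (1 - p) :=
  ⟨hp, add_sub_cancel p 1⟩

variable (h : IsComplementaryProj p q)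
include h

lemma eq_one_sub : q = 1 - p := eq_sub_of_add_eq' h.add_eq_one

lemma symm : IsComplementaryProj q p :=
  ⟨h.eq_one_sub ▸ h.isStarProjection.one_sub, by rw [add_comm, h.add_eq_one]⟩

lemma idem : IsIdempotentElem p := h.isStarProjection.isIdempotentElem

lemma selfAdjoint : IsSelfAdjoint p := h.isStarProjection.isSelfAdjoint

lemma star_eq : star p = p := h.selfAdjoint.star_eq

lemma mul_eq_zero : p * q = 0 := by
  rw [h.eq_one_sub, mul_sub, mul_one, h.idem.eq, sub_self]

lemma decompose (S : R) : S = p * S * p + p * S * q + q * S * p + q * S * q := by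
  calc S = (p + q) * S * (p + q) := by rw [h.add_eq_one, one_mul, mul_one]
    _ = _ := by simp only [add_mul, mul_add]; abel

lemma proj_mul_eq_zero (hx : x ∈ peirceSpace q f) : p * x = 0 := by
  rw [← mul_eq_of_mem_peirceSpace_left hx, ← mul_assoc, h.mul_eq_zero, zero_mul]

lemma mul_proj_eq_zero (hx : x ∈ peirceSpace e q) : x * p = 0 := by
  rw [← mul_eq_of_mem_peirceSpace_right hx, mul_assoc, h.symm.mul_eq_zero, mul_zero]

lemma mul_eq_zero_of_mem (hx : x ∈ peirceSpace e q) (hy : y ∈ peirceSpace p f) : x * y = 0 := by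
  rw [← mul_eq_of_mem_peirceSpace_left hy, ← mul_assoc, h.mul_proj_eq_zero hx, zero_mul]

lemma jstar_eq_add_self_of_mem_pp (hx : x ∈ peirceSpace p p) : jstar p x = x + x := by
  rw [jstar, h.star_eq, mul_eq_of_mem_peirceSpace_left hx,
    mul_eq_of_mem_peirceSpace_right hx]

lemma jstar_eq_self_of_mem_pq (hx : x ∈ peirceSpace p q) : jstar p x = x := by
  rw [jstar, h.star_eq, mul_eq_of_mem_peirceSpace_left hx, h.mul_proj_eq_zero hx,
    add_zero]

lemma jstar_eq_self_of_mem_qp (hx : x ∈ peirceSpace q p) : jstar p x = x := by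
  rw [jstar, h.star_eq, h.proj_mul_eq_zero hx, mul_eq_of_mem_peirceSpace_right hx,
    zero_add]

lemma jstar_eq_zero_of_mem_qq (hx : x ∈ peirceSpace q q) : jstar p x = 0 := by
  rw [jstar, h.star_eq, h.proj_mul_eq_zero hx, h.mul_proj_eq_zero hx, add_zero]

lemma jstar_eq_mul_of_mem_pq (hX : X * p = X) (hD : D ∈ peirceSpace p q) : jstar X D = X * D := by
  have hXs : p * star X = star X := by rw [← h.star_eq, ← star_mul, hX]
  rw [jstar, ← hXs, ← mul_assoc, h.mul_proj_eq_zero hD, zero_mul, add_zero]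

lemma jstar_eq_mul_star_of_mem_pq (hX : X * q = X) (hD : D ∈ peirceSpace p q) :
    jstar X D = D * star X := by
  rw [jstar, ← hX, mul_assoc, h.symm.proj_mul_eq_zero hD, mul_zero, zero_add, hX]

lemma proj_mul_mul_eq_zero (hx : x ∈ peirceSpace q f) (f' : R) : p * x * f' = 0 := by
  rw [h.proj_mul_eq_zero hx, zero_mul]

lemma mul_mul_proj_eq_zero (hx : x ∈ peirceSpace e q) (e' : R) : e' * x * p = 0 := by
  rw [mul_assoc, h.mul_proj_eq_zero hx, mul_zero]

lemma mul_jstar_mul (S : R) : p * jstar p S * q = p * S * q := by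
  rw [jstar, h.star_eq, mul_add, add_mul, ← mul_assoc p p, h.idem.eq, ← mul_assoc p S p,
    mul_assoc (p * S) p, h.mul_eq_zero, mul_zero, add_zero]

lemma components_of_jstar_eq [IsAddTorsionFree R] (hS : jstar q S = y + z)
    (hy : y ∈ peirceSpace p q) (hz : z ∈ peirceSpace q p) :
    p * S * q = y ∧ q * S * p = z ∧ q * S * q = 0 := by
  rw [jstar, h.symm.star_eq] at hS
  have hq := h.symm.idem
  refine ⟨?_, ?_, ?_⟩
  · calc p * S * q = p * (q * S + S * q) * q := by
          rw [mul_add, add_mul, ← mul_assoc p q, h.mul_eq_zero, zero_mul, zero_mul, zero_add,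
            ← mul_assoc, hq.mul_mul_self]
      _ = y := by
          rw [hS, mul_add, add_mul, mul_mul_eq_of_mem_peirceSpace hy, h.proj_mul_mul_eq_zero hz,
            add_zero]
  · calc q * S * p = q * (q * S + S * q) * p := by
          rw [mul_add, add_mul, ← mul_assoc q q, hq.eq, ← mul_assoc, mul_assoc (q * S) q,
            h.symm.mul_eq_zero, mul_zero, add_zero]
      _ = z := by
          rw [hS, mul_add, add_mul, h.symm.proj_mul_mul_eq_zero hy,
            mul_mul_eq_of_mem_peirceSpace hz, zero_add]
  · have h2 : q * S * q + q * S * q = 0 := by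
      calc q * S * q + q * S * q = q * (q * S + S * q) * q := by
            rw [mul_add, add_mul, ← mul_assoc q q, hq.eq, ← mul_assoc, hq.mul_mul_self]
        _ = 0 := by
          rw [hS, mul_add, add_mul, h.symm.proj_mul_mul_eq_zero hy,
            h.symm.mul_mul_proj_eq_zero hz, add_zero]
    grind

lemma compress_eq_zero_of_jstar_eq [IsAddTorsionFree R] (hT : jstar p T = jstar q T) :
    p * T * p = 0 := by
  have h2 : p * T * p + p * T * p = 0 :=
    calc p * T * p + p * T * p = p * jstar p T * p := by
          rw [jstar, h.star_eq, mul_add, add_mul, ← mul_assoc p p, h.idem.eq, ← mul_assoc,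
            h.idem.mul_mul_self]
      _ = p * jstar q T * p := by rw [hT]
      _ = 0 := by
          rw [jstar, h.symm.star_eq, mul_add, add_mul, ← mul_assoc p q, h.mul_eq_zero, zero_mul,
            zero_mul, zero_add, ← mul_assoc, mul_assoc (p * T), h.symm.mul_eq_zero, mul_zero]
  grind

lemma eq_of_forall_mul_eq (hq : IsLeftSeparating q) {t a : R}
    (ht : t * p = t) (ha : a * p = a) (htD : ∀ D ∈ peirceSpace p q, t * D = a * D) : t = a := by
  refine sub_eq_zero.1 (hq _ fun A => ?_)
  calc (t - a) * A * q = t * p * A * q - a * p * A * q := by rw [ht, ha, sub_mul, sub_mul]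
    _ = t * (p * A * q) - a * (p * A * q) := by simp only [mul_assoc]
    _ = 0 := by rw [htD _ (mul_mul_mem_peirceSpace h.idem h.symm.idem A), sub_self]

end IsComplementaryProj

structure IsJStarBijection {R R' : Type*} [Ring R] [StarRing R] [Ring R'] [StarRing R']
    (c : ℕ) (φ : R → R') : Prop where
  map_nsmul_jstar (X Y : R) : φ (c • jstar X Y) = c • jstar (φ X) (φ Y)
  bijective : Function.Bijective φ

namespace IsJStarBijection

variable {R R' : Type*} [Ring R] [StarRing R] [Ring R'] [StarRing R']
variable {c : ℕ} {φ : R → R'} (H : IsJStarBijection c φ)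
variable {p q a b e v w u x y z T : R}
include H

lemma map_zero : φ 0 = 0 := by
  obtain ⟨Z, hZ⟩ := H.bijective.2 0
  simpa [jstar, hZ] using H.map_nsmul_jstar Z 0

lemma map_nsmul_jstar_right_of_eq_add (hT : φ T = φ x + φ y) (W : R) :
    φ (c • jstar W T) = φ (c • jstar W x) + φ (c • jstar W y) := by
  rw [H.map_nsmul_jstar, hT, jstar_add_right_s8, smul_add, ← H.map_nsmul_jstar, ← H.map_nsmul_jstar]

lemma map_nsmul_jstar_left_of_eq_add (hT : φ T = φ x + φ y) (W : R) :
    φ (c • jstar T W) = φ (c • jstar x W) + φ (c • jstar y W) := by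
  rw [H.map_nsmul_jstar, hT, jstar_add_left, smul_add, ← H.map_nsmul_jstar, ← H.map_nsmul_jstar]

lemma map_nsmul_jstar_right_of_eq_add₃ (hT : φ T = φ x + φ y + φ z) (W : R) :
    φ (c • jstar W T) = φ (c • jstar W x) + φ (c • jstar W y) + φ (c • jstar W z) := by
  rw [H.map_nsmul_jstar, hT, jstar_add_right_s8, jstar_add_right_s8, smul_add, smul_add,
    ← H.map_nsmul_jstar, ← H.map_nsmul_jstar, ← H.map_nsmul_jstar]

lemma map_nsmul_jstar_left_of_eq_add₃ (hT : φ T = φ x + φ y + φ z) (W : R) :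
    φ (c • jstar T W) = φ (c • jstar x W) + φ (c • jstar y W) + φ (c • jstar z W) := by
  rw [H.map_nsmul_jstar, hT, jstar_add_left, jstar_add_left, smul_add, smul_add,
    ← H.map_nsmul_jstar, ← H.map_nsmul_jstar, ← H.map_nsmul_jstar]

variable [NeZero c] [IsAddTorsionFree R]

lemma eq_of_map_nsmul_eq (h : φ (c • x) = φ (c • y)) : x = y :=
  nsmul_right_injective (NeZero.ne c) (H.bijective.1 h)

variable (hpq : IsComplementaryProj p q)
include hpq

lemma compress_pq_of_map_eq_add (hT : φ T = φ x + φ y) (hx : x ∈ peirceSpace p q)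
    (hy : y ∈ peirceSpace q p) : p * T * q = x := by
  have hxs := star_mem_peirceSpace hpq.selfAdjoint hpq.symm.selfAdjoint hx
  have hTq : jstar T q = x + star x := by
    refine H.eq_of_map_nsmul_eq ?_
    rw [H.map_nsmul_jstar_left_of_eq_add hT, jstar, jstar, mul_eq_of_mem_peirceSpace_right hx,
      mul_eq_of_mem_peirceSpace_left hxs, hpq.symm.mul_proj_eq_zero hy,
      hpq.symm.proj_mul_eq_zero (star_mem_peirceSpace hpq.symm.selfAdjoint hpq.selfAdjoint hy),
      add_zero, smul_zero, H.map_zero, add_zero]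
  calc p * T * q = p * jstar T q * q := by
        rw [jstar, mul_add, add_mul, ← mul_assoc, hpq.symm.idem.mul_mul_self, ← mul_assoc p q,
          hpq.mul_eq_zero, zero_mul, zero_mul, add_zero]
    _ = x := by
        rw [hTq, mul_add, add_mul, mul_mul_eq_of_mem_peirceSpace hx,
          hpq.proj_mul_mul_eq_zero hxs, add_zero]

lemma map_add_of_mem_pq_of_mem_qp (hx : x ∈ peirceSpace p q) (hy : y ∈ peirceSpace q p) :
    φ (x + y) = φ x + φ y := by
  obtain ⟨T, hT⟩ := H.bijective.2 (φ x + φ y)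
  have hpT : jstar p T = jstar q T := H.eq_of_map_nsmul_eq <| by
    rw [H.map_nsmul_jstar_right_of_eq_add hT, H.map_nsmul_jstar_right_of_eq_add hT,
      hpq.jstar_eq_self_of_mem_pq hx, hpq.jstar_eq_self_of_mem_qp hy,
      hpq.symm.jstar_eq_self_of_mem_qp hx, hpq.symm.jstar_eq_self_of_mem_pq hy]
  rw [← hT, hpq.decompose T, hpq.compress_eq_zero_of_jstar_eq hpT,
    hpq.symm.compress_eq_zero_of_jstar_eq hpT.symm, H.compress_pq_of_map_eq_add hpq hT hx hy,
    H.compress_pq_of_map_eq_add hpq.symm (hT.trans (add_comm _ _)) hy hx, zero_add, add_zero]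

lemma components_of_map_eq_add (hT : φ T = φ a + φ b) (ha : a ∈ peirceSpace p p)
    (hb : b ∈ peirceSpace p q) : p * T * q = b ∧ q * T * p = 0 ∧ q * T * q = 0 := by
  refine hpq.components_of_jstar_eq (H.eq_of_map_nsmul_eq ?_) hb (zero_mem _)
  rw [H.map_nsmul_jstar_right_of_eq_add hT, hpq.symm.jstar_eq_zero_of_mem_qq ha,
    hpq.symm.jstar_eq_self_of_mem_qp hb, smul_zero, H.map_zero, zero_add, add_zero]

lemma eq_of_map_add_eq_add (h : φ (v + w) = φ b + φ a) (hv : v ∈ peirceSpace p q)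
    (hw : w ∈ peirceSpace p p) (hb : b ∈ peirceSpace p q) (ha : a ∈ peirceSpace p p) :
    v = b := by
  obtain ⟨h12, -, -⟩ := H.components_of_map_eq_add hpq (h.trans (add_comm _ _)) ha hb
  rwa [mul_add, add_mul, mul_mul_eq_of_mem_peirceSpace hv, hpq.symm.mul_mul_proj_eq_zero hw,
    add_zero] at h12

lemma map_add_of_mem_pp_of_mem_pq (hq : IsLeftSeparating q) (ha : a ∈ peirceSpace p p)
    (hb : b ∈ peirceSpace p q) : φ (a + b) = φ a + φ b := by
  obtain ⟨T, hT⟩ := H.bijective.2 (φ a + φ b)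
  obtain ⟨h12, h21, h22⟩ := H.components_of_map_eq_add hpq hT ha hb
  have hTt := hpq.decompose T
  rw [h12, h21, h22, add_zero, add_zero] at hTt
  have ht := mul_mul_mem_peirceSpace hpq.idem hpq.idem T
  suffices p * T * p = a by rw [← hT, ← this, ← hTt]
  refine hpq.eq_of_forall_mul_eq hq (mul_eq_of_mem_peirceSpace_right ht)
    (mul_eq_of_mem_peirceSpace_right ha) fun D hD => nsmul_right_injective (NeZero.ne c) ?_
  have hbs := star_mem_peirceSpace hpq.selfAdjoint hpq.symm.selfAdjoint hb
  have hDb := nsmul_mem (mul_mem_peirceSpace hD hbs) c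
  have hD_test := H.map_nsmul_jstar_left_of_eq_add (hTt ▸ hT) D
  rw [jstar_add_left, hpq.jstar_eq_mul_of_mem_pq (mul_eq_of_mem_peirceSpace_right ht) hD,
    hpq.jstar_eq_mul_of_mem_pq (mul_eq_of_mem_peirceSpace_right ha) hD,
    hpq.jstar_eq_mul_star_of_mem_pq (mul_eq_of_mem_peirceSpace_right hb) hD, smul_add] at hD_test
  exact H.eq_of_map_add_eq_add hpq hD_test (nsmul_mem (mul_mem_peirceSpace ht hD) c)
    hDb (nsmul_mem (mul_mem_peirceSpace ha hD) c) hDb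

lemma eq_of_map_add₃_eq_add₃ (hq : IsLeftSeparating q) (h : φ (v + w + u) = φ b + φ a + φ e)
    (hv : v ∈ peirceSpace p q) (hw : w ∈ peirceSpace p p) (hu : u ∈ peirceSpace q q)
    (hb : b ∈ peirceSpace p q) (ha : a ∈ peirceSpace p p) (he : e ∈ peirceSpace q q) : v = b := by
  have haa := add_mem ha ha
  have hpS : jstar p (v + w + u) = a + a + b := H.eq_of_map_nsmul_eq <| by
    rw [H.map_nsmul_jstar_right_of_eq_add₃ h, hpq.jstar_eq_self_of_mem_pq hb,
      hpq.jstar_eq_add_self_of_mem_pp ha, hpq.jstar_eq_zero_of_mem_qq he, smul_zero, H.map_zero,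
      add_zero, smul_add c (a + a) b,
      H.map_add_of_mem_pp_of_mem_pq hpq hq (nsmul_mem haa c) (nsmul_mem hb c), add_comm]
  calc v = p * (v + w + u) * q := by
        rw [mul_add, mul_add, add_mul, add_mul, mul_mul_eq_of_mem_peirceSpace hv,
          hpq.symm.mul_mul_proj_eq_zero hw, hpq.proj_mul_mul_eq_zero hu, add_zero, add_zero]
    _ = b := by
        rw [← hpq.mul_jstar_mul, hpS, mul_add, add_mul, mul_mul_eq_of_mem_peirceSpace hb,
          hpq.symm.mul_mul_proj_eq_zero haa, zero_add]

lemma map_add_add_of_mem_pp_of_mem_pq_of_mem_qp (hq : IsLeftSeparating q)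
    (hx : x ∈ peirceSpace p p) (hy : y ∈ peirceSpace p q) (hz : z ∈ peirceSpace q p) :
    φ (x + y + z) = φ x + φ y + φ z := by
  obtain ⟨T, hT⟩ := H.bijective.2 (φ x + φ y + φ z)
  have hqT : jstar q T = y + z := H.eq_of_map_nsmul_eq <| by
    rw [H.map_nsmul_jstar_right_of_eq_add₃ hT, hpq.symm.jstar_eq_zero_of_mem_qq hx,
      hpq.symm.jstar_eq_self_of_mem_qp hy, hpq.symm.jstar_eq_self_of_mem_pq hz, smul_zero,
      H.map_zero, zero_add, smul_add,
      H.map_add_of_mem_pq_of_mem_qp hpq (nsmul_mem hy c) (nsmul_mem hz c)]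
  obtain ⟨h12, h21, h22⟩ := hpq.components_of_jstar_eq hqT hy hz
  have hTt := hpq.decompose T
  rw [h12, h21, h22, add_zero] at hTt
  have ht := mul_mul_mem_peirceSpace hpq.idem hpq.idem T
  suffices p * T * p = x by rw [← hT, ← this, ← hTt]
  refine hpq.eq_of_forall_mul_eq hq (mul_eq_of_mem_peirceSpace_right ht)
    (mul_eq_of_mem_peirceSpace_right hx) fun D hD => nsmul_right_injective (NeZero.ne c) ?_
  have hDy := nsmul_mem (mul_mem_peirceSpace hD
    (star_mem_peirceSpace hpq.selfAdjoint hpq.symm.selfAdjoint hy)) c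
  have hzD := nsmul_mem (mul_mem_peirceSpace hz hD) c
  have hD_test := H.map_nsmul_jstar_left_of_eq_add₃ (hTt ▸ hT) D
  rw [jstar_add_left, jstar_add_left,
    hpq.jstar_eq_mul_of_mem_pq (mul_eq_of_mem_peirceSpace_right ht) hD,
    hpq.jstar_eq_mul_of_mem_pq (mul_eq_of_mem_peirceSpace_right hx) hD,
    hpq.jstar_eq_mul_star_of_mem_pq (mul_eq_of_mem_peirceSpace_right hy) hD,
    hpq.jstar_eq_mul_of_mem_pq (mul_eq_of_mem_peirceSpace_right hz) hD, smul_add, smul_add]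
    at hD_test
  exact H.eq_of_map_add₃_eq_add₃ hpq hq hD_test (nsmul_mem (mul_mem_peirceSpace ht hD) c) hDy hzD
    (nsmul_mem (mul_mem_peirceSpace hx hD) c) hDy hzD

lemma map_nsmul_add_of_mem_pq (hp : IsLeftSeparating p) (hq : IsLeftSeparating q)
    (hx : x ∈ peirceSpace p q) (hy : y ∈ peirceSpace p q) :
    φ (c • (x + y)) = φ (c • x) + φ (c • y) := by
  have hxs := star_mem_peirceSpace hpq.selfAdjoint hpq.symm.selfAdjoint hx
  have hp' : p ∈ peirceSpace p p := ⟨hpq.idem.eq, hpq.idem.eq⟩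
  have hq' : q ∈ peirceSpace q q := ⟨hpq.symm.idem.eq, hpq.symm.idem.eq⟩
  have hX := H.map_add_of_mem_pp_of_mem_pq hpq.symm hp hq' hxs
  have hY := H.map_add_of_mem_pp_of_mem_pq hpq hq hp' hy
  have hprod : jstar (q + star x) (p + y) = star x * y + star x + (x + y) := by
    simp only [jstar, star_add, star_star, hpq.symm.star_eq, add_mul, mul_add,
      hpq.mul_eq_zero, hpq.symm.mul_eq_zero, hpq.symm.proj_mul_eq_zero hy,
      hpq.mul_eq_zero_of_mem hy hx, mul_eq_of_mem_peirceSpace_right hxs,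
      mul_eq_of_mem_peirceSpace_left hx, mul_eq_of_mem_peirceSpace_right hy, zero_add, add_zero]
    abel
  have hsplit : φ (c • jstar (q + star x) (p + y)) =
      φ (c • (star x * y)) + φ (c • star x) + φ (c • x) + φ (c • y) := by
    rw [H.map_nsmul_jstar, hX, hY, jstar_add_left, jstar_add_right_s8, jstar_add_right_s8, smul_add,
      smul_add, smul_add, ← H.map_nsmul_jstar, ← H.map_nsmul_jstar, ← H.map_nsmul_jstar,
      ← H.map_nsmul_jstar]
    have hqp : jstar q p = 0 := by
      rw [jstar, hpq.symm.star_eq, hpq.mul_eq_zero, hpq.symm.mul_eq_zero, add_zero]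
    have hxp : jstar (star x) p = star x + x := by
      rw [jstar, star_star, mul_eq_of_mem_peirceSpace_right hxs, mul_eq_of_mem_peirceSpace_left hx]
    have hxy : jstar (star x) y = star x * y := by
      rw [jstar, star_star, hpq.mul_eq_zero_of_mem hy hx, add_zero]
    rw [hqp, hpq.symm.jstar_eq_self_of_mem_qp hy, hxp, hxy, smul_zero, H.map_zero, smul_add,
      H.map_add_of_mem_pq_of_mem_qp hpq.symm (nsmul_mem hxs c) (nsmul_mem hx c)]
    abel
  rw [hprod, smul_add c (star x * y + star x), smul_add c (star x * y),
    H.map_add_add_of_mem_pp_of_mem_pq_of_mem_qp hpq.symm hp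
      (nsmul_mem (mul_mem_peirceSpace hxs hy) c) (nsmul_mem hxs c) (nsmul_mem (add_mem hx hy) c),
    add_assoc _ (φ (c • x))] at hsplit
  exact add_left_cancel hsplit

lemma map_add_of_mem_pp (hp : IsLeftSeparating p) (hq : IsLeftSeparating q)
    (hA : a ∈ peirceSpace p p) (hB : b ∈ peirceSpace p p) : φ (a + b) = φ a + φ b := by
  obtain ⟨T, hT⟩ := H.bijective.2 (φ a + φ b)
  have hqT : jstar q T = 0 + 0 := H.eq_of_map_nsmul_eq <| by
    rw [H.map_nsmul_jstar_right_of_eq_add hT, hpq.symm.jstar_eq_zero_of_mem_qq hA,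
      hpq.symm.jstar_eq_zero_of_mem_qq hB, add_zero, smul_zero, H.map_zero, add_zero]
  obtain ⟨h12, h21, h22⟩ := hpq.components_of_jstar_eq hqT (zero_mem _) (zero_mem _)
  have hTt := hpq.decompose T
  rw [h12, h21, h22, add_zero, add_zero, add_zero] at hTt
  have ht := mul_mul_mem_peirceSpace hpq.idem hpq.idem T
  suffices p * T * p = a + b by rw [← hT, ← this, ← hTt]
  refine hpq.eq_of_forall_mul_eq hq (mul_eq_of_mem_peirceSpace_right ht)
    (mul_eq_of_mem_peirceSpace_right (add_mem hA hB)) fun D hD => H.eq_of_map_nsmul_eq ?_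
  have hD_test := H.map_nsmul_jstar_left_of_eq_add (hTt ▸ hT) D
  rw [hpq.jstar_eq_mul_of_mem_pq (mul_eq_of_mem_peirceSpace_right ht) hD,
    hpq.jstar_eq_mul_of_mem_pq (mul_eq_of_mem_peirceSpace_right hA) hD,
    hpq.jstar_eq_mul_of_mem_pq (mul_eq_of_mem_peirceSpace_right hB) hD] at hD_test
  rw [hD_test, add_mul, H.map_nsmul_add_of_mem_pq hpq hp hq (mul_mem_peirceSpace hA hD)
    (mul_mem_peirceSpace hB hD)]

end IsJStarBijection

theorem stmt8_general {𝔄 𝔄' : Type*} [CStarAlgebra 𝔄] [CStarAlgebra 𝔄']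
    (n : ℕ)
    (P₁ : 𝔄) (hproj : P₁ * P₁ = P₁) (hsa : star P₁ = P₁)
    (φ : 𝔄 → 𝔄') (hbij : Function.Bijective φ) (hunital : φ 1 = 1)
    (hqI : ∀ A B : 𝔄, φ (qstar (List.replicate (n - 2) 1 ++ [A, B])) =
      qstar (List.replicate (n - 2) (φ 1) ++ [φ A, φ B]))
    (hspade : ∀ P ∈ ({P₁, 1 - P₁} : Set 𝔄), ∀ X : 𝔄, (∀ A : 𝔄, X * A * P = 0) → X = 0) :
    ∀ P ∈ ({P₁, 1 - P₁} : Set 𝔄), ∀ A B : 𝔄, P * A * P = A → P * B * P = B →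
      φ (A + B) = φ A + φ B := by
  intro P hP A B hA hB
  have : IsAddTorsionFree 𝔄 := .of_isTorsionFree ℂ 𝔄
  have H : IsJStarBijection (2 ^ (n - 2)) φ :=
    ⟨fun X Y => by simpa [hunital, qstar_replicate_one_append] using hqI X Y, hbij⟩
  have hP₁ : IsStarProjection P₁ := ⟨hproj, hsa⟩
  obtain ⟨hPproj, hP'⟩ : IsStarProjection P ∧ 1 - P ∈ ({P₁, 1 - P₁} : Set 𝔄) := by
    rcases hP with rfl | rfl
    · exact ⟨hP₁, .inr rfl⟩
    · exact ⟨hP₁.one_sub, .inl (sub_sub_cancel 1 P₁)⟩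
  have hpq := IsComplementaryProj.one_sub hPproj
  exact H.map_add_of_mem_pp hpq (hspade P hP) (hspade _ hP')
    ((mem_peirceSpace_iff hPproj.isIdempotentElem hPproj.isIdempotentElem).2 hA)
    ((mem_peirceSpace_iff hPproj.isIdempotentElem hPproj.isIdempotentElem).2 hB)

theorem stmt8 {𝔄 𝔄' : Type*} [CStarAlgebra 𝔄] [CStarAlgebra 𝔄']
    (n : ℕ) (hn : 2 ≤ n)
    (P₁ : 𝔄) (hproj : P₁ * P₁ = P₁) (hsa : star P₁ = P₁) (hne0 : P₁ ≠ 0) (hne1 : P₁ ≠ 1)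
    (φ : 𝔄 → 𝔄') (hbij : Function.Bijective φ) (hunital : φ 1 = 1)
    (hqI : ∀ A B : 𝔄, φ (qstar (List.replicate (n - 2) 1 ++ [A, B])) =
      qstar (List.replicate (n - 2) (φ 1) ++ [φ A, φ B]))
    (hqP : ∀ P ∈ ({P₁, 1 - P₁} : Set 𝔄), ∀ A B : 𝔄,
      φ (qstar (List.replicate (n - 2) P ++ [A, B])) =
      qstar (List.replicate (n - 2) (φ P) ++ [φ A, φ B]))
    (hspade : ∀ P ∈ ({P₁, 1 - P₁} : Set 𝔄), ∀ X : 𝔄, (∀ A : 𝔄, X * A * P = 0) → X = 0) :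
    ∀ P ∈ ({P₁, 1 - P₁} : Set 𝔄), ∀ A B : 𝔄, P * A * P = A → P * B * P = B →
      φ (A + B) = φ A + φ B :=
  stmt8_general n P₁ hproj hsa φ hbij hunital hqI hspade
end

section
/- Theorem (additivity): Let 𝔄, 𝔄' be unital C*-algebras, P₁ a nontrivial projection in 𝔄, P₂ = I − P₁, and suppose 𝔄 satisfies (♠): X𝔄P_i = {0} implies X = 0 (i = 1,2). If φ : 𝔄 → 𝔄' is a bijective unital map satisfying φ(q_{n*}(I,...,I,A,B)) = q_{n*}(φ(I),...,φ(I),φ(A),φ(B)) and φ(q_{n*}(P,...,P,A,B)) = q_{n*}(φ(P),...,φ(P),φ(A),φ(B)) for all A,B ∈ 𝔄 and P ∈ {P₁,P₂}, then φ is additive and φ(A*) = φ(A)* for all A. -/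
section prelim
variable {R : Type*} [Ring R] [StarRing R]

lemma jstar_add_right_s9 (A B C : R) : jstar A (B + C) = jstar A B + jstar A C := by
  simp [jstar, mul_add, add_mul]; abel

lemma jstar_add_left_s9 (A B C : R) : jstar (A + B) C = jstar A C + jstar B C := by
  simp [jstar, mul_add, add_mul, star_add]; abel

lemma jstar_sub_right (A B C : R) : jstar A (B - C) = jstar A B - jstar A C := by
  simp [jstar, mul_sub, sub_mul]; abel

lemma jstar_nsmul_right (n : ℕ) (A B : R) : jstar A (n • B) = n • jstar A B := by
  unfold jstar; rw [mul_smul_comm, smul_mul_assoc, smul_add]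

lemma jstar_nsmul_left_s9 (n : ℕ) (A B : R) : jstar (n • A) B = n • jstar A B := by
  unfold jstar; rw [smul_mul_assoc, star_nsmul, mul_smul_comm, smul_add]

end prelim

set_option maxHeartbeats 4000000 in
theorem aux {A A' : Type*} [Ring A] [StarRing A] [Ring A'] [StarRing A']
    (φ : A → A') (hinj : Function.Injective φ) (hsurj : Function.Surjective φ)
    (hu : φ 1 = 1)
    (P1 P2 : A) (hsum : P1 + P2 = 1) (hp : P1 * P1 = P1) (hps : star P1 = P1)
    (c : ℕ)
    (hR : ∀ a b : A, φ (c • jstar a b) = c • jstar (φ a) (φ b))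
    (hcA : ∀ x y : A, c • x = c • y → x = y)
    (hcA' : ∀ x y : A', c • x = c • y → x = y)
    (h2A : ∀ x y : A, x + x = y + y → x = y)
    (hdvd : ∀ x : A, ∃ y, c • y = x)
    (hsp1 : ∀ X : A, (∀ a : A, X * a * P1 = 0) → X = 0)
    (hsp2 : ∀ X : A, (∀ a : A, X * a * P2 = 0) → X = 0) :
    (∀ a b : A, φ (a + b) = φ a + φ b) ∧ (∀ a : A, φ (star a) = star (φ a)) := by
  -- ring facts about P1, P2
  have hP2eq : P2 = 1 - P1 := by rw [← hsum]; abel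
  have e12 : P1 * P2 = 0 := by rw [hP2eq, mul_sub, mul_one, hp, sub_self]
  have e21 : P2 * P1 = 0 := by rw [hP2eq, sub_mul, one_mul, hp, sub_self]
  have hp2 : P2 * P2 = P2 := by
    rw [hP2eq, sub_mul, one_mul, mul_sub, mul_one, hp, ← hP2eq]; abel
  have hps2 : star P2 = P2 := by rw [hP2eq, star_sub, star_one, hps]
  -- assoc-normalized rew紀iting helpers
  have A11 : ∀ z : A, P1 * (P1 * z) = P1 * z := fun z => by rw [← mul_assoc, hp]
  have A22 : ∀ z : A, P2 * (P2 * z) = P2 * z := fun z => by rw [← mul_assoc, hp2]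
  have A12 : ∀ z : A, P1 * (P2 * z) = 0 := fun z => by rw [← mul_assoc, e12, zero_mul]
  have A21 : ∀ z : A, P2 * (P1 * z) = 0 := fun z => by rw [← mul_assoc, e21, zero_mul]
  -- decomposition
  have hdec : ∀ x : A, P1*x*P1 + P1*x*P2 + P2*x*P1 + P2*x*P2 = x := by
    intro x
    have h1 : P1*x*P1 + P1*x*P2 + P2*x*P1 + P2*x*P2 = (P1+P2)*x*(P1+P2) := by noncomm_ring
    rw [h1, hsum, one_mul, mul_one]
  have hzero : φ 0 = 0 := by
    obtain ⟨S, hS⟩ := hsurj 0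
    have h0 : φ (c • jstar (0 : A) S) = c • jstar (φ 0) (φ S) := hR 0 S
    simp only [jstar, zero_mul, mul_zero, star_zero, add_zero, zero_add, smul_zero, hS] at h0
    simpa using h0
  -- master relations
  have ME : ∀ a b w : A, φ w = φ a + φ b →
      ∀ C : A, φ (c • jstar C w) = φ (c • jstar C a) + φ (c • jstar C b) := by
    intro a b w hw C
    rw [hR, hR, hR, hw, jstar_add_right_s9, smul_add]
  have MF : ∀ a b w : A, φ w = φ a + φ b →
      ∀ C : A, φ (c • jstar w C) = φ (c • jstar a C) + φ (c • jstar b C) := by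
    intro a b w hw C
    rw [hR, hR, hR, hw, jstar_add_left_s9, smul_add]
  have ME3 : ∀ a b e w : A, φ w = φ a + φ b + φ e →
      ∀ C : A, φ (c • jstar C w) = φ (c • jstar C a) + φ (c • jstar C b) + φ (c • jstar C e) := by
    intro a b e w hw C
    rw [hR, hR, hR, hR, hw, jstar_add_right_s9, jstar_add_right_s9, smul_add, smul_add]
  have B3 : ∀ x : A, φ (c • (x + star x)) = c • (φ x + star (φ x)) := by
    intro x
    have h := hR x 1
    simpa [jstar, hu, star_one] using h
  have cinj : ∀ x y : A, φ (c • x) = φ (c • y) → x = y := by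
    intro x y h
    exact hcA x y (hinj h)
  -- jstar values on Peirce corners
  have j1 : ∀ x : A, jstar P1 (P1*x*P2) = P1*x*P2 := by
    intro x; simp [jstar, mul_assoc, A11, A22, A12, A21, hps, hps2, hp, hp2, e12, e21]
  have j2 : ∀ x : A, jstar P2 (P1*x*P2) = P1*x*P2 := by
    intro x; simp [jstar, mul_assoc, A11, A22, A12, A21, hps, hps2, hp, hp2, e12, e21]
  have j3 : ∀ x : A, jstar P1 (P2*x*P1) = P2*x*P1 := by
    intro x; simp [jstar, mul_assoc, A11, A22, A12, A21, hps, hps2, hp, hp2, e12, e21]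
  have j4 : ∀ x : A, jstar P2 (P2*x*P1) = P2*x*P1 := by
    intro x; simp [jstar, mul_assoc, A11, A22, A12, A21, hps, hps2, hp, hp2, e12, e21]
  have j5 : ∀ x : A, jstar (P1*x*P2) P1 = 0 := by
    intro x; simp [jstar, mul_assoc, A11, A22, A12, A21, hps, hps2, star_mul, hp, hp2, e12, e21]
  have j6 : ∀ x : A, jstar (P1*x*P2) P2 = P1*x*P2 + star (P1*x*P2) := by
    intro x; simp [jstar, mul_assoc, A11, A22, A12, A21, hps, hps2, star_mul, hp, hp2, e12, e21]
  have j7 : ∀ x : A, jstar (P2*x*P1) P1 = P2*x*P1 + star (P2*x*P1) := by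
    intro x; simp [jstar, mul_assoc, A11, A22, A12, A21, hps, hps2, star_mul, hp, hp2, e12, e21]
  have j8 : ∀ x : A, jstar (P2*x*P1) P2 = 0 := by
    intro x; simp [jstar, mul_assoc, A11, A22, A12, A21, hps, hps2, star_mul, hp, hp2, e12, e21]
  have j9 : ∀ x : A, jstar P1 (P1*x*P1) = P1*x*P1 + P1*x*P1 := by
    intro x; simp [jstar, mul_assoc, A11, A22, A12, A21, hps, hps2, hp, hp2, e12, e21]
  have j10 : ∀ x : A, jstar P2 (P1*x*P1) = 0 := by
    intro x; simp [jstar, mul_assoc, A11, A22, A12, A21, hps, hps2, hp, hp2, e12, e21]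
  have j11 : ∀ x : A, jstar P1 (P2*x*P2) = 0 := by
    intro x; simp [jstar, mul_assoc, A11, A22, A12, A21, hps, hps2, hp, hp2, e12, e21]
  have j12 : ∀ x : A, jstar P2 (P2*x*P2) = P2*x*P2 + P2*x*P2 := by
    intro x; simp [jstar, mul_assoc, A11, A22, A12, A21, hps, hps2, hp, hp2, e12, e21]
  have jKform : ∀ T : A, jstar P2 (jstar P1 T) = P1*T*P2 + P2*T*P1 := by
    intro T
    simp [jstar, mul_assoc, A11, A22, A12, A21, hps, hps2, hp, hp2, e12, e21, mul_add, add_mul]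
    abel
  have jK_P1 : ∀ T : A, jstar (jstar P2 (jstar P1 T)) P1 = P2*T*P1 + star (P2*T*P1) := by
    intro T
    rw [jKform, jstar_add_left_s9, j5, j7, zero_add]
  have jK_P2 : ∀ T : A, jstar (jstar P2 (jstar P1 T)) P2 = P1*T*P2 + star (P1*T*P2) := by
    intro T
    rw [jKform, jstar_add_left_s9, j6, j8, add_zero]
  have cancc : ∀ x y : A, (c*c) • x = (c*c) • y → x = y := by
    intro x y h
    rw [mul_smul, mul_smul] at h
    exact hcA _ _ (hcA _ _ h)
  have sb : ∀ (m : ℕ) (p q z : A), m • (p*z*q) = p*(m • z)*q := by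
    intro m p q z; rw [mul_smul_comm, smul_mul_assoc]
  have ext21 : ∀ s y : A, P2*s*P1 + star (P2*s*P1) = P2*y*P1 + star (P2*y*P1) →
      P2*s*P1 = P2*y*P1 := by
    intro s y h
    have h2 := congrArg (fun z => P2*z*P1) h
    simpa [mul_add, add_mul, mul_assoc, A11, A22, A12, A21, star_mul, hps, hps2,
      hp, hp2, e12, e21] using h2
  have ext12 : ∀ s y : A, P1*s*P2 + star (P1*s*P2) = P1*y*P2 + star (P1*y*P2) →
      P1*s*P2 = P1*y*P2 := by
    intro s y h
    have h2 := congrArg (fun z => P1*z*P2) h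
    simpa [mul_add, add_mul, mul_assoc, A11, A22, A12, A21, star_mul, hps, hps2,
      hp, hp2, e12, e21] using h2
  -- step A (scaled)
  have stepAkey : ∀ x y : A,
      φ ((c*c) • (P1*x*P2) + (c*c) • (P2*y*P1)) =
        φ ((c*c) • (P1*x*P2)) + φ ((c*c) • (P2*y*P1)) := by
    intro x y
    obtain ⟨T, hT⟩ := hsurj (φ (P1*x*P2) + φ (P2*y*P1))
    have h1 : φ (c • jstar P1 T) = φ (c • (P1*x*P2)) + φ (c • (P2*y*P1)) := by
      have h := ME _ _ T hT P1
      rwa [j1, j3] at h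
    have h2 : φ ((c*c) • jstar P2 (jstar P1 T)) =
        φ ((c*c) • (P1*x*P2)) + φ ((c*c) • (P2*y*P1)) := by
      have h := ME _ _ _ h1 P2
      rwa [jstar_nsmul_right, jstar_nsmul_right, jstar_nsmul_right, j2, j4,
        smul_smul, smul_smul, smul_smul] at h
    have hbeq : P2*T*P1 = P2*y*P1 := by
      have h3 := MF _ _ _ h2 P1
      rw [jstar_nsmul_left_s9, jstar_nsmul_left_s9, jstar_nsmul_left_s9, j5, j7, jK_P1,
        smul_zero, smul_zero, hzero, zero_add] at h3
      exact ext21 _ _ (cancc _ _ (hcA _ _ (hinj h3)))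
    have haeq : P1*T*P2 = P1*x*P2 := by
      have h3 := MF _ _ _ h2 P2
      rw [jstar_nsmul_left_s9, jstar_nsmul_left_s9, jstar_nsmul_left_s9, j6, j8, jK_P2,
        smul_zero, smul_zero, hzero, add_zero] at h3
      exact ext12 _ _ (cancc _ _ (hcA _ _ (hinj h3)))
    have hK : jstar P2 (jstar P1 T) = P1*x*P2 + P2*y*P1 := by
      rw [jKform, haeq, hbeq]
    rw [hK, smul_add] at h2
    exact h2
  have stepA : ∀ a b : A, P1*a*P2 = a → P2*b*P1 = b → φ (a + b) = φ a + φ b := by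
    intro a b ha hb
    obtain ⟨y1, hy1⟩ := hdvd a
    obtain ⟨y2, hy2⟩ := hdvd y1
    obtain ⟨z1, hz1⟩ := hdvd b
    obtain ⟨z2, hz2⟩ := hdvd z1
    have hya : (c*c) • (P1*y2*P2) = a := by
      rw [sb, mul_smul, hy2, hy1, ha]
    have hyb : (c*c) • (P2*z2*P1) = b := by
      rw [sb, mul_smul, hz2, hz1, hb]
    have h := stepAkey y2 z2
    rwa [hya, hyb] at h
  -- star membership lemmas
  have mst12 : ∀ b : A, P1*b*P2 = b → P2*(star b)*P1 = star b := by
    intro b hb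
    have h := congrArg star hb
    simpa [star_mul, hps, hps2, mul_assoc] using h
  have mst21 : ∀ b : A, P2*b*P1 = b → P1*(star b)*P2 = star b := by
    intro b hb
    have h := congrArg star hb
    simpa [star_mul, hps, hps2, mul_assoc] using h
  have mst11 : ∀ b : A, P1*b*P1 = b → P1*(star b)*P1 = star b := by
    intro b hb
    have h := congrArg star hb
    simpa [star_mul, hps, hps2, mul_assoc] using h
  have mst22 : ∀ b : A, P2*b*P2 = b → P2*(star b)*P2 = star b := by
    intro b hb
    have h := congrArg star hb
    simpa [star_mul, hps, hps2, mul_assoc] using h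
  -- symmetrized additivity for same-corner pairs
  have L10 : ∀ a b : A, P1*a*P2 = a → P1*b*P2 = b →
      φ (c • (a + star a + (b + star b))) = φ (c • (a + star a)) + φ (c • (b + star b)) := by
    intro a b ha hb
    have hW : φ (a + star b) = φ a + φ (star b) := stepA a (star b) ha (mst12 b hb)
    have h1 := B3 (a + star b)
    rw [star_add, star_star] at h1
    have e : a + star b + (star a + b) = a + star a + (b + star b) := by abel
    rw [e, hW] at h1
    have h2 := B3 a
    have h3 := B3 (star b)
    rw [star_star] at h3
    have e3 : star b + b = b + star b := by abel
    rw [e3] at h3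
    rw [h1, h2, h3, star_add, ← smul_add]
    congr 1
    abel
  have L10' : ∀ a b : A, P2*a*P1 = a → P2*b*P1 = b →
      φ (c • (a + star a + (b + star b))) = φ (c • (a + star a)) + φ (c • (b + star b)) := by
    intro a b ha hb
    have hW : φ (star a + b) = φ (star a) + φ b := stepA (star a) b (mst21 a ha) hb
    have h1 := B3 (star a + b)
    rw [star_add, star_star] at h1
    have e : star a + b + (a + star b) = a + star a + (b + star b) := by abel
    rw [e, hW] at h1
    have h2 := B3 (star a)
    rw [star_star] at h2
    have e2 : star a + a = a + star a := by abel
    rw [e2] at h2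
    have h3 := B3 b
    rw [h1, h2, h3, star_add, ← smul_add]
    congr 1
    abel
  -- star triple forms
  have stf12 : ∀ w : A, star (P1*w*P2) = P2*(star w)*P1 := by
    intro w; simp [star_mul, mul_assoc, hps, hps2]
  have stf21 : ∀ w : A, star (P2*w*P1) = P1*(star w)*P2 := by
    intro w; simp [star_mul, mul_assoc, hps, hps2]
  have stf11 : ∀ w : A, star (P1*w*P1) = P1*(star w)*P1 := by
    intro w; simp [star_mul, mul_assoc, hps, hps2]
  have stf22 : ∀ w : A, star (P2*w*P2) = P2*(star w)*P2 := by
    intro w; simp [star_mul, mul_assoc, hps, hps2]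
  -- block projections of triple products
  have pr12_12 : ∀ w : A, P1*(P1*w*P2)*P2 = P1*w*P2 := by
    intro w; simp [mul_assoc, A11, A22, A12, A21, hp, hp2, e12, e21]
  have pr12of21 : ∀ w : A, P1*(P2*w*P1)*P2 = 0 := by
    intro w; simp [mul_assoc, A11, A22, A12, A21, hp, hp2, e12, e21]
  have pr12of11 : ∀ w : A, P1*(P1*w*P1)*P2 = 0 := by
    intro w; simp [mul_assoc, A11, A22, A12, A21, hp, hp2, e12, e21]
  have pr12of22 : ∀ w : A, P1*(P2*w*P2)*P2 = 0 := by
    intro w; simp [mul_assoc, A11, A22, A12, A21, hp, hp2, e12, e21]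
  have pr21_21 : ∀ w : A, P2*(P2*w*P1)*P1 = P2*w*P1 := by
    intro w; simp [mul_assoc, A11, A22, A12, A21, hp, hp2, e12, e21]
  have pr21of12 : ∀ w : A, P2*(P1*w*P2)*P1 = 0 := by
    intro w; simp [mul_assoc, A11, A22, A12, A21, hp, hp2, e12, e21]
  have pr21of11 : ∀ w : A, P2*(P1*w*P1)*P1 = 0 := by
    intro w; simp [mul_assoc, A11, A22, A12, A21, hp, hp2, e12, e21]
  have pr21of22 : ∀ w : A, P2*(P2*w*P2)*P1 = 0 := by
    intro w; simp [mul_assoc, A11, A22, A12, A21, hp, hp2, e12, e21]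
  have pr11_11 : ∀ w : A, P1*(P1*w*P1)*P1 = P1*w*P1 := by
    intro w; simp [mul_assoc, A11, A22, A12, A21, hp, hp2, e12, e21]
  have pr11of12 : ∀ w : A, P1*(P1*w*P2)*P1 = 0 := by
    intro w; simp [mul_assoc, A11, A22, A12, A21, hp, hp2, e12, e21]
  have pr11of21 : ∀ w : A, P1*(P2*w*P1)*P1 = 0 := by
    intro w; simp [mul_assoc, A11, A22, A12, A21, hp, hp2, e12, e21]
  have pr11of22 : ∀ w : A, P1*(P2*w*P2)*P1 = 0 := by
    intro w; simp [mul_assoc, A11, A22, A12, A21, hp, hp2, e12, e21]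
  have pr22_22 : ∀ w : A, P2*(P2*w*P2)*P2 = P2*w*P2 := by
    intro w; simp [mul_assoc, A11, A22, A12, A21, hp, hp2, e12, e21]
  have pr22of12 : ∀ w : A, P2*(P1*w*P2)*P2 = 0 := by
    intro w; simp [mul_assoc, A11, A22, A12, A21, hp, hp2, e12, e21]
  have pr22of21 : ∀ w : A, P2*(P2*w*P1)*P2 = 0 := by
    intro w; simp [mul_assoc, A11, A22, A12, A21, hp, hp2, e12, e21]
  have pr22of11 : ∀ w : A, P2*(P1*w*P1)*P2 = 0 := by
    intro w; simp [mul_assoc, A11, A22, A12, A21, hp, hp2, e12, e21]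
  have hre : ∀ z : A, (c*c) • (z + star z) = (c*c) • z + star ((c*c) • z) := by
    intro z; rw [smul_add, star_nsmul]
  have mem12s : ∀ (m : ℕ) (x : A), P1*(m • (P1*x*P2))*P2 = m • (P1*x*P2) := by
    intro m x; rw [← sb, pr12_12]
  have mem21s : ∀ (m : ℕ) (x : A), P2*(m • (P2*x*P1))*P1 = m • (P2*x*P1) := by
    intro m x; rw [← sb, pr21_21]
  -- G12 : additivity on the (1,2) corner
  have G12key : ∀ x y : A,
      φ ((c*c) • (P1*x*P2) + (c*c) • (P1*y*P2)) =
        φ ((c*c) • (P1*x*P2)) + φ ((c*c) • (P1*y*P2)) := by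
    intro x y
    obtain ⟨T, hT⟩ := hsurj (φ (P1*x*P2) + φ (P1*y*P2))
    have h1 : φ (c • jstar P1 T) = φ (c • (P1*x*P2)) + φ (c • (P1*y*P2)) := by
      have h := ME _ _ T hT P1
      rwa [j1, j1] at h
    have h2 : φ ((c*c) • jstar P2 (jstar P1 T)) =
        φ ((c*c) • (P1*x*P2)) + φ ((c*c) • (P1*y*P2)) := by
      have h := ME _ _ _ h1 P2
      rwa [jstar_nsmul_right, jstar_nsmul_right, jstar_nsmul_right, j2, j2,
        smul_smul, smul_smul, smul_smul] at h
    have h21zero : P2*T*P1 = 0 := by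
      have h3 := MF _ _ _ h2 P1
      rw [jstar_nsmul_left_s9, jstar_nsmul_left_s9, jstar_nsmul_left_s9, j5, j5, jK_P1] at h3
      simp only [smul_zero, hzero, add_zero] at h3
      have h5 : c • ((c*c) • (P2*T*P1 + star (P2*T*P1))) = c • ((c*c) • (0:A)) := by
        apply hinj; rw [h3]; simp only [smul_zero, hzero]
      have h6 := cancc _ _ (hcA _ _ h5)
      have h7 := congrArg (fun z => P2*z*P1) h6
      simpa [mul_add, add_mul, mul_assoc, A11, A22, A12, A21, star_mul, hps, hps2, hp, hp2, e12, e21] using h7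
    have h8 := MF _ _ _ h2 P2
    rw [jstar_nsmul_left_s9, jstar_nsmul_left_s9, jstar_nsmul_left_s9, j6, j6, jK_P2] at h8
    have hL := L10 ((c*c) • (P1*x*P2)) ((c*c) • (P1*y*P2)) (mem12s _ x) (mem12s _ y)
    rw [← hre, ← hre] at hL
    rw [← hL] at h8
    -- h8 : φ (c•((c*c)•(P1*T*P2 + star (P1*T*P2)))) = φ (c•((c*c)•a + star _ + (...)))
    have h9 : P1*T*P2 + star (P1*T*P2) =
        P1*x*P2 + star (P1*x*P2) + (P1*y*P2 + star (P1*y*P2)) := by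
      have h5 : c • ((c*c) • (P1*T*P2 + star (P1*T*P2))) =
          c • ((c*c) • (P1*x*P2 + star (P1*x*P2) + (P1*y*P2 + star (P1*y*P2)))) := by
        apply hinj
        rw [h8]
        congr 1
        rw [← smul_add]
      exact cancc _ _ (hcA _ _ h5)
    have hk : P1*T*P2 = P1*x*P2 + P1*y*P2 := by
      have h10 := congrArg (fun z => P1*z*P2) h9
      simpa [mul_add, add_mul, mul_assoc, A11, A22, A12, A21, star_mul, hps, hps2, hp, hp2, e12, e21] using h10
    have hK : jstar P2 (jstar P1 T) = P1*x*P2 + P1*y*P2 := by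
      rw [jKform, hk, h21zero, add_zero]
    rw [hK, smul_add] at h2
    exact h2
  have G12 : ∀ a b : A, P1*a*P2 = a → P1*b*P2 = b → φ (a + b) = φ a + φ b := by
    intro a b ha hb
    obtain ⟨y1, hy1⟩ := hdvd a
    obtain ⟨y2, hy2⟩ := hdvd y1
    obtain ⟨z1, hz1⟩ := hdvd b
    obtain ⟨z2, hz2⟩ := hdvd z1
    have hya : (c*c) • (P1*y2*P2) = a := by
      rw [sb, mul_smul, hy2, hy1, ha]
    have hyb : (c*c) • (P1*z2*P2) = b := by
      rw [sb, mul_smul, hz2, hz1, hb]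
    have h := G12key y2 z2
    rwa [hya, hyb] at h
  -- G21 : additivity on the (2,1) corner
  have G21key : ∀ x y : A,
      φ ((c*c) • (P2*x*P1) + (c*c) • (P2*y*P1)) =
        φ ((c*c) • (P2*x*P1)) + φ ((c*c) • (P2*y*P1)) := by
    intro x y
    obtain ⟨T, hT⟩ := hsurj (φ (P2*x*P1) + φ (P2*y*P1))
    have h1 : φ (c • jstar P1 T) = φ (c • (P2*x*P1)) + φ (c • (P2*y*P1)) := by
      have h := ME _ _ T hT P1
      rwa [j3, j3] at h
    have h2 : φ ((c*c) • jstar P2 (jstar P1 T)) =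
        φ ((c*c) • (P2*x*P1)) + φ ((c*c) • (P2*y*P1)) := by
      have h := ME _ _ _ h1 P2
      rwa [jstar_nsmul_right, jstar_nsmul_right, jstar_nsmul_right, j4, j4,
        smul_smul, smul_smul, smul_smul] at h
    have h12zero : P1*T*P2 = 0 := by
      have h3 := MF _ _ _ h2 P2
      rw [jstar_nsmul_left_s9, jstar_nsmul_left_s9, jstar_nsmul_left_s9, j8, j8, jK_P2] at h3
      simp only [smul_zero, hzero, add_zero] at h3
      have h5 : c • ((c*c) • (P1*T*P2 + star (P1*T*P2))) = c • ((c*c) • (0:A)) := by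
        apply hinj; rw [h3]; simp only [smul_zero, hzero]
      have h6 := cancc _ _ (hcA _ _ h5)
      have h7 := congrArg (fun z => P1*z*P2) h6
      simpa [mul_add, add_mul, mul_assoc, A11, A22, A12, A21, star_mul, hps, hps2, hp, hp2, e12, e21] using h7
    have h8 := MF _ _ _ h2 P1
    rw [jstar_nsmul_left_s9, jstar_nsmul_left_s9, jstar_nsmul_left_s9, j7, j7, jK_P1] at h8
    have hL := L10' ((c*c) • (P2*x*P1)) ((c*c) • (P2*y*P1)) (mem21s _ x) (mem21s _ y)
    rw [← hre, ← hre] at hL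
    rw [← hL] at h8
    have h9 : P2*T*P1 + star (P2*T*P1) =
        P2*x*P1 + star (P2*x*P1) + (P2*y*P1 + star (P2*y*P1)) := by
      have h5 : c • ((c*c) • (P2*T*P1 + star (P2*T*P1))) =
          c • ((c*c) • (P2*x*P1 + star (P2*x*P1) + (P2*y*P1 + star (P2*y*P1)))) := by
        apply hinj
        rw [h8]
        congr 1
        rw [← smul_add]
      exact cancc _ _ (hcA _ _ h5)
    have hk : P2*T*P1 = P2*x*P1 + P2*y*P1 := by
      have h10 := congrArg (fun z => P2*z*P1) h9
      simpa [mul_add, add_mul, mul_assoc, A11, A22, A12, A21, star_mul, hps, hps2, hp, hp2, e12, e21] using h10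
    have hK : jstar P2 (jstar P1 T) = P2*x*P1 + P2*y*P1 := by
      rw [jKform, hk, h12zero, zero_add]
    rw [hK, smul_add] at h2
    exact h2
  have G21 : ∀ a b : A, P2*a*P1 = a → P2*b*P1 = b → φ (a + b) = φ a + φ b := by
    intro a b ha hb
    obtain ⟨y1, hy1⟩ := hdvd a
    obtain ⟨y2, hy2⟩ := hdvd y1
    obtain ⟨z1, hz1⟩ := hdvd b
    obtain ⟨z2, hz2⟩ := hdvd z1
    have hya : (c*c) • (P2*y2*P1) = a := by
      rw [sb, mul_smul, hy2, hy1, ha]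
    have hyb : (c*c) • (P2*z2*P1) = b := by
      rw [sb, mul_smul, hz2, hz1, hb]
    have h := G21key y2 z2
    rwa [hya, hyb] at h
  -- additivity on off-diagonal part
  have GO : ∀ u v : A, P1*u*P1 = 0 → P2*u*P2 = 0 → P1*v*P1 = 0 → P2*v*P2 = 0 →
      φ (u + v) = φ u + φ v := by
    intro u v hu1 hu2 hv1 hv2
    have hud : P1*u*P2 + P2*u*P1 = u := by
      have h := hdec u
      rwa [hu1, hu2, zero_add, add_zero] at h
    have hvd : P1*v*P2 + P2*v*P1 = v := by
      have h := hdec v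
      rwa [hv1, hv2, zero_add, add_zero] at h
    have m12uv : P1*(P1*u*P2 + P1*v*P2)*P2 = P1*u*P2 + P1*v*P2 := by
      rw [mul_add, add_mul, pr12_12, pr12_12]
    have m21uv : P2*(P2*u*P1 + P2*v*P1)*P1 = P2*u*P1 + P2*v*P1 := by
      rw [mul_add, add_mul, pr21_21, pr21_21]
    have e1 : u + v = (P1*u*P2 + P1*v*P2) + (P2*u*P1 + P2*v*P1) := by
      conv_lhs => rw [← hud, ← hvd]
      abel
    calc φ (u + v) = φ ((P1*u*P2 + P1*v*P2) + (P2*u*P1 + P2*v*P1)) := by rw [← e1]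
      _ = φ (P1*u*P2 + P1*v*P2) + φ (P2*u*P1 + P2*v*P1) := stepA _ _ m12uv m21uv
      _ = (φ (P1*u*P2) + φ (P1*v*P2)) + (φ (P2*u*P1) + φ (P2*v*P1)) := by
          rw [G12 _ _ (pr12_12 u) (pr12_12 v), G21 _ _ (pr21_21 u) (pr21_21 v)]
      _ = (φ (P1*u*P2) + φ (P2*u*P1)) + (φ (P1*v*P2) + φ (P2*v*P1)) := by abel
      _ = φ (P1*u*P2 + P2*u*P1) + φ (P1*v*P2 + P2*v*P1) := by
          rw [stepA _ _ (pr12_12 u) (pr21_21 u), stepA _ _ (pr12_12 v) (pr21_21 v)]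
      _ = φ u + φ v := by rw [hud, hvd]
  -- 𝔒 facts
  have jP1O : ∀ u : A, P1*u*P1 = 0 → P2*u*P2 = 0 → jstar P1 u = u := by
    intro u h1 h2
    have hud : P1*u*P2 + P2*u*P1 = u := by
      have h := hdec u
      rwa [h1, h2, zero_add, add_zero] at h
    calc jstar P1 u = jstar P1 (P1*u*P2 + P2*u*P1) := by rw [hud]
      _ = P1*u*P2 + P2*u*P1 := by rw [jstar_add_right_s9, j1, j3]
      _ = u := hud
  have jP2O : ∀ u : A, P1*u*P1 = 0 → P2*u*P2 = 0 → jstar P2 u = u := by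
    intro u h1 h2
    have hud : P1*u*P2 + P2*u*P1 = u := by
      have h := hdec u
      rwa [h1, h2, zero_add, add_zero] at h
    calc jstar P2 u = jstar P2 (P1*u*P2 + P2*u*P1) := by rw [hud]
      _ = P1*u*P2 + P2*u*P1 := by rw [jstar_add_right_s9, j2, j4]
      _ = u := hud
  have sbmem : ∀ (m : ℕ) (p q z w : A), p*z*q = w → p*(m • z)*q = m • w := by
    intro m p q z w h; rw [← sb, h]
  -- pinning lemmas
  have pin1 : ∀ T u : A, P1*u*P1 = 0 → P2*u*P2 = 0 → jstar P1 T = u → T = u + P2*T*P2 := by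
    intro T u hu1 hu2 hj0
    have hu1' : P1*(u*P1) = 0 := by rw [← mul_assoc]; exact hu1
    have hu2' : P2*(u*P2) = 0 := by rw [← mul_assoc]; exact hu2
    have hj : P1*T + T*P1 = u := by
      have h : jstar P1 T = P1*T + T*P1 := by rw [jstar, hps]
      rwa [h] at hj0
    have h11 : P1*(T*P1) = 0 := by
      have h := congrArg (fun z => P1*z*P1) hj
      have h2 : P1*(T*P1) + P1*(T*P1) = 0 + 0 := by
        simpa [mul_add, add_mul, mul_assoc, A11, A22, A12, A21, hp, hp2, e12, e21, hu1'] using h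
      exact h2A _ _ h2
    have h12 : P1*(T*P2) = P1*(u*P2) := by
      have h := congrArg (fun z => P1*z*P2) hj
      simpa [mul_add, add_mul, mul_assoc, A11, A22, A12, A21, hp, hp2, e12, e21] using h
    have h21 : P2*(T*P1) = P2*(u*P1) := by
      have h := congrArg (fun z => P2*z*P1) hj
      simpa [mul_add, add_mul, mul_assoc, A11, A22, A12, A21, hp, hp2, e12, e21] using h
    have hud : P1*(u*P2) + P2*(u*P1) = u := by
      have h := hdec u
      rw [hu1, hu2, zero_add, add_zero] at h
      rwa [mul_assoc, mul_assoc] at h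
    have hT' : P1*(T*P1) + P1*(T*P2) + P2*(T*P1) + P2*(T*P2) = T := by
      have h := hdec T
      rwa [mul_assoc P1 T P1, mul_assoc P1 T P2, mul_assoc P2 T P1, mul_assoc P2 T P2] at h
    rw [h11, h12, h21, zero_add, hud] at hT'
    have h := hT'.symm
    rwa [← mul_assoc] at h
  have pin2 : ∀ T u : A, P1*u*P1 = 0 → P2*u*P2 = 0 → jstar P2 T = u → T = u + P1*T*P1 := by
    intro T u hu1 hu2 hj0
    have hu1' : P1*(u*P1) = 0 := by rw [← mul_assoc]; exact hu1
    have hu2' : P2*(u*P2) = 0 := by rw [← mul_assoc]; exact hu2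
    have hj : P2*T + T*P2 = u := by
      have h : jstar P2 T = P2*T + T*P2 := by rw [jstar, hps2]
      rwa [h] at hj0
    have h22 : P2*(T*P2) = 0 := by
      have h := congrArg (fun z => P2*z*P2) hj
      have h2 : P2*(T*P2) + P2*(T*P2) = 0 + 0 := by
        simpa [mul_add, add_mul, mul_assoc, A11, A22, A12, A21, hp, hp2, e12, e21, hu2'] using h
      exact h2A _ _ h2
    have h12 : P1*(T*P2) = P1*(u*P2) := by
      have h := congrArg (fun z => P1*z*P2) hj
      simpa [mul_add, add_mul, mul_assoc, A11, A22, A12, A21, hp, hp2, e12, e21] using h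
    have h21 : P2*(T*P1) = P2*(u*P1) := by
      have h := congrArg (fun z => P2*z*P1) hj
      simpa [mul_add, add_mul, mul_assoc, A11, A22, A12, A21, hp, hp2, e12, e21] using h
    have hud : P1*(u*P2) + P2*(u*P1) = u := by
      have h := hdec u
      rw [hu1, hu2, zero_add, add_zero] at h
      rwa [mul_assoc, mul_assoc] at h
    have hT' : P1*(T*P1) + P1*(T*P2) + P2*(T*P1) + P2*(T*P2) = T := by
      have h := hdec T
      rwa [mul_assoc P1 T P1, mul_assoc P1 T P2, mul_assoc P2 T P1, mul_assoc P2 T P2] at h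
    rw [h22, h12, h21, add_zero] at hT'
    -- hT' : P1*(T*P1) + P1*(u*P2) + P2*(u*P1) = T
    have hre2 : P1*(T*P1) + P1*(u*P2) + P2*(u*P1) = u + P1*(T*P1) := by
      rw [add_assoc, hud]; abel
    rw [hre2] at hT'
    have h := hT'.symm
    rwa [← mul_assoc] at h
  -- shape lemmas
  have SL1 : ∀ a u w : A, P1*a*P1 = a → P1*u*P1 = 0 → P2*u*P2 = 0 →
      φ w = φ a + φ u → jstar P2 w = u := by
    intro a u w ha hu1 hu2 hw
    have h := ME _ _ _ hw P2
    have hza : jstar P2 a = 0 := by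
      conv_lhs => rw [← ha]
      exact j10 a
    rw [hza, smul_zero, hzero, zero_add, jP2O u hu1 hu2] at h
    exact cinj _ _ h
  have SL2 : ∀ a u w : A, P2*a*P2 = a → P1*u*P1 = 0 → P2*u*P2 = 0 →
      φ w = φ u + φ a → jstar P1 w = u := by
    intro a u w ha hu1 hu2 hw
    have h := ME _ _ _ hw P1
    have hza : jstar P1 a = 0 := by
      conv_lhs => rw [← ha]
      exact j11 a
    rw [hza, smul_zero, hzero, add_zero, jP1O u hu1 hu2] at h
    exact cinj _ _ h
  -- transport identities
  have jsw12 : ∀ x T : A, jstar P2 (jstar (P1*x*P2) T) = jstar (P1*x*P2) (P2*T*P2) := by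
    intro x T
    simp [jstar, mul_add, add_mul, mul_assoc, A11, A22, A12, A21, hp, hp2, e12, e21,
      star_mul, hps, hps2]
    abel
  have jsw21 : ∀ x T : A, jstar P1 (jstar (P2*x*P1) T) = jstar (P2*x*P1) (P1*T*P1) := by
    intro x T
    simp [jstar, mul_add, add_mul, mul_assoc, A11, A22, A12, A21, hp, hp2, e12, e21,
      star_mul, hps, hps2]
    abel
  -- membership of transported elements
  have mA : ∀ x z w : A, P1*(jstar (P1*x*P2) (P1*z*P2 + P2*w*P1))*P1 =
      jstar (P1*x*P2) (P1*z*P2 + P2*w*P1) := by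
    intro x z w
    simp [jstar, mul_add, add_mul, mul_assoc, A11, A22, A12, A21, hp, hp2, e12, e21,
      star_mul, hps, hps2]
  have mB1 : ∀ x w : A, P1*(jstar (P1*x*P2) (P2*w*P2))*P1 = 0 := by
    intro x w
    simp [jstar, mul_add, add_mul, mul_assoc, A11, A22, A12, A21, hp, hp2, e12, e21,
      star_mul, hps, hps2]
  have mB2 : ∀ x w : A, P2*(jstar (P1*x*P2) (P2*w*P2))*P2 = 0 := by
    intro x w
    simp [jstar, mul_add, add_mul, mul_assoc, A11, A22, A12, A21, hp, hp2, e12, e21,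
      star_mul, hps, hps2]
  have mC : ∀ x z w : A, P2*(jstar (P2*x*P1) (P1*z*P2 + P2*w*P1))*P2 =
      jstar (P2*x*P1) (P1*z*P2 + P2*w*P1) := by
    intro x z w
    simp [jstar, mul_add, add_mul, mul_assoc, A11, A22, A12, A21, hp, hp2, e12, e21,
      star_mul, hps, hps2]
  have mD1 : ∀ x w : A, P1*(jstar (P2*x*P1) (P1*w*P1))*P1 = 0 := by
    intro x w
    simp [jstar, mul_add, add_mul, mul_assoc, A11, A22, A12, A21, hp, hp2, e12, e21,
      star_mul, hps, hps2]
  have mD2 : ∀ x w : A, P2*(jstar (P2*x*P1) (P1*w*P1))*P2 = 0 := by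
    intro x w
    simp [jstar, mul_add, add_mul, mul_assoc, A11, A22, A12, A21, hp, hp2, e12, e21,
      star_mul, hps, hps2]
  have mr11 : ∀ z : A, P1*z*P1 = z → z*P1 = z := by
    intro z h
    conv_lhs => rw [← h]
    rw [mul_assoc (P1*z) P1 P1, hp]
    exact h
  have mr22 : ∀ z : A, P2*z*P2 = z → z*P2 = z := by
    intro z h
    conv_lhs => rw [← h]
    rw [mul_assoc (P2*z) P2 P2, hp2]
    exact h
  have keyext12 : ∀ δ : A, P2*δ*P2 = δ → (∀ x : A, jstar (P1*x*P2) δ = 0) →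
      ∀ x : A, (P1*x*P2)*δ = 0 := by
    intro δ hδ hj x
    have hδP2 : δ*P2 = δ := mr22 δ hδ
    have hexp : (P1*x*P2)*δ + δ*star (P1*x*P2) = 0 := by
      have h := hj x; rwa [jstar] at h
    have h := congrArg (fun z => z * P2) hexp
    simpa [add_mul, zero_mul, mul_assoc, star_mul, hps, hps2, e12, e21, hp, hp2,
      A11, A22, A12, A21, hδP2] using h
  have keyext21 : ∀ δ : A, P1*δ*P1 = δ → (∀ x : A, jstar (P2*x*P1) δ = 0) →
      ∀ x : A, (P2*x*P1)*δ = 0 := by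
    intro δ hδ hj x
    have hδP1 : δ*P1 = δ := mr11 δ hδ
    have hexp : (P2*x*P1)*δ + δ*star (P2*x*P1) = 0 := by
      have h := hj x; rwa [jstar] at h
    have h := congrArg (fun z => z * P1) hexp
    simpa [add_mul, zero_mul, mul_assoc, star_mul, hps, hps2, e12, e21, hp, hp2,
      A11, A22, A12, A21, hδP1] using h
  have kill22 : ∀ δ : A, P2*δ*P2 = δ → (∀ x : A, (P1*x*P2)*δ = 0) → δ = 0 := by
    intro δ hδ key
    have hst : P2*(star δ)*P2 = star δ := mst22 δ hδ
    have hδsP2 : star δ * P2 = star δ := mr22 _ hst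
    have hs : ∀ y : A, (star δ)*y*P1 = 0 := by
      intro y
      have h := congrArg star (key (star y))
      have h' : star δ * (P2*(y*P1)) = 0 := by
        simpa [star_mul, mul_assoc, hps, hps2, star_star] using h
      rw [mul_assoc, ← hδsP2, mul_assoc]
      exact h'
    have h := hsp1 (star δ) hs
    rw [← star_star δ, h, star_zero]
  have kill11 : ∀ δ : A, P1*δ*P1 = δ → (∀ x : A, (P2*x*P1)*δ = 0) → δ = 0 := by
    intro δ hδ key
    have hst : P1*(star δ)*P1 = star δ := mst11 δ hδ
    have hδsP1 : star δ * P1 = star δ := mr11 _ hst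
    have hs : ∀ y : A, (star δ)*y*P2 = 0 := by
      intro y
      have h := congrArg star (key (star y))
      have h' : star δ * (P1*(y*P2)) = 0 := by
        simpa [star_mul, mul_assoc, hps, hps2, star_star] using h
      rw [mul_assoc, ← hδsP1, mul_assoc]
      exact h'
    have h := hsp2 (star δ) hs
    rw [← star_star δ, h, star_zero]
  -- additivity : off-diagonal + (2,2) corner
  have GO22 : ∀ u e : A, P1*u*P1 = 0 → P2*u*P2 = 0 → P2*e*P2 = e →
      φ (u + e) = φ u + φ e := by
    intro u e hu1 hu2 he
    obtain ⟨T, hT⟩ := hsurj (φ u + φ e)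
    have hze : jstar P1 e = 0 := by
      conv_lhs => rw [← he]
      exact j11 e
    have h1 := ME _ _ _ hT P1
    rw [jP1O u hu1 hu2, hze, smul_zero, hzero, add_zero] at h1
    have hpin : jstar P1 T = u := cinj _ _ h1
    have hTdec : T = u + P2*T*P2 := pin1 T u hu1 hu2 hpin
    have hud0 : P1*u*P2 + P2*u*P1 = u := by
      have h := hdec u; rwa [hu1, hu2, zero_add, add_zero] at h
    have htr : ∀ x : A, jstar (P1*x*P2) (P2*T*P2) = jstar (P1*x*P2) e := by
      intro x
      have hM := ME _ _ _ hT (P1*x*P2)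
      have ma : P1*(c • jstar (P1*x*P2) u)*P1 = c • jstar (P1*x*P2) u := by
        apply sbmem
        have h := mA x u u
        rwa [hud0] at h
      have mb1 : P1*(c • jstar (P1*x*P2) e)*P1 = 0 := by
        have h0 : P1*(jstar (P1*x*P2) e)*P1 = 0 := by
          conv_lhs => rw [← he]
          exact mB1 x e
        have h := sbmem c _ _ _ _ h0
        rwa [smul_zero] at h
      have mb2 : P2*(c • jstar (P1*x*P2) e)*P2 = 0 := by
        have h0 : P2*(jstar (P1*x*P2) e)*P2 = 0 := by
          conv_lhs => rw [← he]
          exact mB2 x e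
        have h := sbmem c _ _ _ _ h0
        rwa [smul_zero] at h
      have hsl := SL1 _ _ _ ma mb1 mb2 hM
      rw [jstar_nsmul_right, jsw12] at hsl
      exact hcA _ _ hsl
    have hδ0 : ∀ x : A, jstar (P1*x*P2) (P2*T*P2 - e) = 0 := by
      intro x; rw [jstar_sub_right, htr, sub_self]
    have hδ22 : P2*(P2*T*P2 - e)*P2 = P2*T*P2 - e := by
      rw [mul_sub, sub_mul, pr22_22, he]
    have hδzero : P2*T*P2 - e = 0 :=
      kill22 _ hδ22 (keyext12 _ hδ22 hδ0)
    have hTe : T = u + e := by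
      rw [hTdec, sub_eq_zero.mp hδzero]
    rw [hTe] at hT
    exact hT
  -- additivity : (1,1) corner + off-diagonal
  have G11O : ∀ d u : A, P1*d*P1 = d → P1*u*P1 = 0 → P2*u*P2 = 0 →
      φ (d + u) = φ d + φ u := by
    intro d u hd hu1 hu2
    obtain ⟨T, hT⟩ := hsurj (φ d + φ u)
    have hzd : jstar P2 d = 0 := by
      conv_lhs => rw [← hd]
      exact j10 d
    have h1 := ME _ _ _ hT P2
    rw [hzd, smul_zero, hzero, zero_add, jP2O u hu1 hu2] at h1
    have hpin : jstar P2 T = u := cinj _ _ h1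
    have hTdec : T = u + P1*T*P1 := pin2 T u hu1 hu2 hpin
    have hud0 : P1*u*P2 + P2*u*P1 = u := by
      have h := hdec u; rwa [hu1, hu2, zero_add, add_zero] at h
    have htr : ∀ x : A, jstar (P2*x*P1) (P1*T*P1) = jstar (P2*x*P1) d := by
      intro x
      have hM := ME _ _ _ hT (P2*x*P1)
      have ma : P2*(c • jstar (P2*x*P1) u)*P2 = c • jstar (P2*x*P1) u := by
        apply sbmem
        have h := mC x u u
        rwa [hud0] at h
      have md1 : P1*(c • jstar (P2*x*P1) d)*P1 = 0 := by
        have h0 : P1*(jstar (P2*x*P1) d)*P1 = 0 := by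
          conv_lhs => rw [← hd]
          exact mD1 x d
        have h := sbmem c _ _ _ _ h0
        rwa [smul_zero] at h
      have md2 : P2*(c • jstar (P2*x*P1) d)*P2 = 0 := by
        have h0 : P2*(jstar (P2*x*P1) d)*P2 = 0 := by
          conv_lhs => rw [← hd]
          exact mD2 x d
        have h := sbmem c _ _ _ _ h0
        rwa [smul_zero] at h
      have hsl := SL2 _ _ _ ma md1 md2 hM
      rw [jstar_nsmul_right, jsw21] at hsl
      exact hcA _ _ hsl
    have hδ0 : ∀ x : A, jstar (P2*x*P1) (P1*T*P1 - d) = 0 := by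
      intro x; rw [jstar_sub_right, htr, sub_self]
    have hδ11 : P1*(P1*T*P1 - d)*P1 = P1*T*P1 - d := by
      rw [mul_sub, sub_mul, pr11_11, hd]
    have hδzero : P1*T*P1 - d = 0 :=
      kill11 _ hδ11 (keyext21 _ hδ11 hδ0)
    have hTe : T = d + u := by
      rw [hTdec, sub_eq_zero.mp hδzero]
      abel
    rw [hTe] at hT
    exact hT
  -- additivity within the (1,1) corner
  have G11 : ∀ d d' : A, P1*d*P1 = d → P1*d'*P1 = d' → φ (d + d') = φ d + φ d' := by
    intro d d' hd hd'
    obtain ⟨T, hT⟩ := hsurj (φ d + φ d')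
    have hzd : jstar P2 d = 0 := by
      conv_lhs => rw [← hd]
      exact j10 d
    have hzd' : jstar P2 d' = 0 := by
      conv_lhs => rw [← hd']
      exact j10 d'
    have h1 := ME _ _ _ hT P2
    rw [hzd, hzd', smul_zero, hzero, add_zero] at h1
    have h1' : φ (c • jstar P2 T) = φ (c • (0:A)) := by rw [h1, smul_zero, hzero]
    have hpin : jstar P2 T = 0 := cinj _ _ h1'
    have hTdec : T = P1*T*P1 := by
      have h := pin2 T 0 (by simp) (by simp) hpin
      rwa [zero_add] at h
    have htr : ∀ x : A, jstar (P2*x*P1) (T - (d + d')) = 0 := by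
      intro x
      have hM := ME _ _ _ hT (P2*x*P1)
      have md1 : ∀ z : A, P1*z*P1 = z → P1*(c • jstar (P2*x*P1) z)*P1 = 0 := by
        intro z hz
        have h0 : P1*(jstar (P2*x*P1) z)*P1 = 0 := by
          conv_lhs => rw [← hz]
          exact mD1 x z
        have h := sbmem c _ _ _ _ h0
        rwa [smul_zero] at h
      have md2 : ∀ z : A, P1*z*P1 = z → P2*(c • jstar (P2*x*P1) z)*P2 = 0 := by
        intro z hz
        have h0 : P2*(jstar (P2*x*P1) z)*P2 = 0 := by
          conv_lhs => rw [← hz]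
          exact mD2 x z
        have h := sbmem c _ _ _ _ h0
        rwa [smul_zero] at h
      have hGO := GO _ _ (md1 d hd) (md2 d hd) (md1 d' hd') (md2 d' hd')
      rw [← hGO] at hM
      have hM' : φ (c • jstar (P2*x*P1) T) = φ (c • jstar (P2*x*P1) (d + d')) := by
        rw [hM, jstar_add_right_s9, smul_add]
      have h := cinj _ _ hM'
      rw [jstar_sub_right, h, sub_self]
    have hδ11 : P1*(T - (d + d'))*P1 = T - (d + d') := by
      rw [mul_sub, sub_mul, mul_add, add_mul, hd, hd', ← hTdec]
    have hδzero : T - (d + d') = 0 :=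
      kill11 _ hδ11 (keyext21 _ hδ11 htr)
    rw [sub_eq_zero.mp hδzero] at hT
    exact hT
  -- additivity within the (2,2) corner
  have G22 : ∀ d d' : A, P2*d*P2 = d → P2*d'*P2 = d' → φ (d + d') = φ d + φ d' := by
    intro d d' hd hd'
    obtain ⟨T, hT⟩ := hsurj (φ d + φ d')
    have hzd : jstar P1 d = 0 := by
      conv_lhs => rw [← hd]
      exact j11 d
    have hzd' : jstar P1 d' = 0 := by
      conv_lhs => rw [← hd']
      exact j11 d'
    have h1 := ME _ _ _ hT P1
    rw [hzd, hzd', smul_zero, hzero, add_zero] at h1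
    have h1' : φ (c • jstar P1 T) = φ (c • (0:A)) := by rw [h1, smul_zero, hzero]
    have hpin : jstar P1 T = 0 := cinj _ _ h1'
    have hTdec : T = P2*T*P2 := by
      have h := pin1 T 0 (by simp) (by simp) hpin
      rwa [zero_add] at h
    have htr : ∀ x : A, jstar (P1*x*P2) (T - (d + d')) = 0 := by
      intro x
      have hM := ME _ _ _ hT (P1*x*P2)
      have mb1 : ∀ z : A, P2*z*P2 = z → P1*(c • jstar (P1*x*P2) z)*P1 = 0 := by
        intro z hz
        have h0 : P1*(jstar (P1*x*P2) z)*P1 = 0 := by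
          conv_lhs => rw [← hz]
          exact mB1 x z
        have h := sbmem c _ _ _ _ h0
        rwa [smul_zero] at h
      have mb2 : ∀ z : A, P2*z*P2 = z → P2*(c • jstar (P1*x*P2) z)*P2 = 0 := by
        intro z hz
        have h0 : P2*(jstar (P1*x*P2) z)*P2 = 0 := by
          conv_lhs => rw [← hz]
          exact mB2 x z
        have h := sbmem c _ _ _ _ h0
        rwa [smul_zero] at h
      have hGO := GO _ _ (mb1 d hd) (mb2 d hd) (mb1 d' hd') (mb2 d' hd')
      rw [← hGO] at hM
      have hM' : φ (c • jstar (P1*x*P2) T) = φ (c • jstar (P1*x*P2) (d + d')) := by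
        rw [hM, jstar_add_right_s9, smul_add]
      have h := cinj _ _ hM'
      rw [jstar_sub_right, h, sub_self]
    have hδ22 : P2*(T - (d + d'))*P2 = T - (d + d') := by
      rw [mul_sub, sub_mul, mul_add, add_mul, hd, hd', ← hTdec]
    have hδzero : T - (d + d') = 0 :=
      kill22 _ hδ22 (keyext12 _ hδ22 htr)
    rw [sub_eq_zero.mp hδzero] at hT
    exact hT
  -- decomposition claim
  have ClaimD : ∀ x : A,
      φ x = φ (P1*x*P1) + φ (P1*x*P2 + P2*x*P1) + φ (P2*x*P2) := by
    intro x
    obtain ⟨T, hT⟩ := hsurj (φ (P1*x*P1) + φ (P1*x*P2 + P2*x*P1) + φ (P2*x*P2))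
    have hu1 : P1*(P1*x*P2 + P2*x*P1)*P1 = 0 := by
      rw [mul_add, add_mul, pr11of12, pr11of21, add_zero]
    have hu2 : P2*(P1*x*P2 + P2*x*P1)*P2 = 0 := by
      rw [mul_add, add_mul, pr22of12, pr22of21, add_zero]
    have hcu1 : P1*(c • (P1*x*P2 + P2*x*P1))*P1 = 0 := by
      have h := sbmem c _ _ _ _ hu1; rwa [smul_zero] at h
    have hcu2 : P2*(c • (P1*x*P2 + P2*x*P1))*P2 = 0 := by
      have h := sbmem c _ _ _ _ hu2; rwa [smul_zero] at h
    have h1 := ME3 _ _ _ _ hT P1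
    rw [j9, jP1O _ hu1 hu2, j11, smul_zero, hzero, add_zero] at h1
    have hdd : P1*(P1*x*P1 + P1*x*P1)*P1 = P1*x*P1 + P1*x*P1 := by
      rw [mul_add, add_mul, pr11_11]
    have hmerge := G11O (c • (P1*x*P1 + P1*x*P1)) (c • (P1*x*P2 + P2*x*P1))
      (sbmem c _ _ _ _ hdd) hcu1 hcu2
    rw [← hmerge] at h1
    have h1' : φ (c • jstar P1 T) =
        φ (c • (P1*x*P1 + P1*x*P1 + (P1*x*P2 + P2*x*P1))) := by
      rw [h1, ← smul_add]
    have hpin1 : jstar P1 T = P1*x*P1 + P1*x*P1 + (P1*x*P2 + P2*x*P1) := cinj _ _ h1'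
    have h2 := ME3 _ _ _ _ hT P2
    rw [j10, jP2O _ hu1 hu2, j12, smul_zero, hzero, zero_add] at h2
    have hee : P2*(P2*x*P2 + P2*x*P2)*P2 = P2*x*P2 + P2*x*P2 := by
      rw [mul_add, add_mul, pr22_22]
    have hmerge2 := GO22 (c • (P1*x*P2 + P2*x*P1)) (c • (P2*x*P2 + P2*x*P2))
      hcu1 hcu2 (sbmem c _ _ _ _ hee)
    rw [← hmerge2] at h2
    have h2' : φ (c • jstar P2 T) =
        φ (c • (P1*x*P2 + P2*x*P1 + (P2*x*P2 + P2*x*P2))) := by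
      rw [h2, ← smul_add]
    have hpin2 : jstar P2 T = P1*x*P2 + P2*x*P1 + (P2*x*P2 + P2*x*P2) := cinj _ _ h2'
    have hsum2 : jstar P1 T + jstar P2 T = T + T := by
      rw [jstar, jstar, hps, hps2]
      have h : P1*T + T*P1 + (P2*T + T*P2) = (P1+P2)*T + T*(P1+P2) := by noncomm_ring
      rw [h, hsum, one_mul, mul_one]
    rw [hpin1, hpin2] at hsum2
    have hx := hdec x
    have hTx : T + T = x + x := by
      rw [← hsum2]
      conv_rhs => rw [← hx]
      abel
    rw [h2A _ _ hTx] at hT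
    exact hT
  -- full additivity
  have Hadd : ∀ a b : A, φ (a + b) = φ a + φ b := by
    intro a b
    have l11 : P1*(a+b)*P1 = P1*a*P1 + P1*b*P1 := by rw [mul_add, add_mul]
    have l22 : P2*(a+b)*P2 = P2*a*P2 + P2*b*P2 := by rw [mul_add, add_mul]
    have loff : P1*(a+b)*P2 + P2*(a+b)*P1 =
        (P1*a*P2 + P2*a*P1) + (P1*b*P2 + P2*b*P1) := by
      rw [mul_add, add_mul, mul_add, add_mul]; abel
    have mema1 : P1*(P1*a*P2 + P2*a*P1)*P1 = 0 := by
      rw [mul_add, add_mul, pr11of12, pr11of21, add_zero]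
    have mema2 : P2*(P1*a*P2 + P2*a*P1)*P2 = 0 := by
      rw [mul_add, add_mul, pr22of12, pr22of21, add_zero]
    have memb1 : P1*(P1*b*P2 + P2*b*P1)*P1 = 0 := by
      rw [mul_add, add_mul, pr11of12, pr11of21, add_zero]
    have memb2 : P2*(P1*b*P2 + P2*b*P1)*P2 = 0 := by
      rw [mul_add, add_mul, pr22of12, pr22of21, add_zero]
    calc φ (a+b)
        = φ (P1*(a+b)*P1) + φ (P1*(a+b)*P2 + P2*(a+b)*P1) + φ (P2*(a+b)*P2) :=
          ClaimD (a+b)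
      _ = φ (P1*a*P1 + P1*b*P1) + φ ((P1*a*P2 + P2*a*P1) + (P1*b*P2 + P2*b*P1)) +
          φ (P2*a*P2 + P2*b*P2) := by rw [l11, loff, l22]
      _ = (φ (P1*a*P1) + φ (P1*b*P1)) + (φ (P1*a*P2 + P2*a*P1) + φ (P1*b*P2 + P2*b*P1)) +
          (φ (P2*a*P2) + φ (P2*b*P2)) := by
            rw [G11 _ _ (pr11_11 a) (pr11_11 b), G22 _ _ (pr22_22 a) (pr22_22 b),
              GO _ _ mema1 mema2 memb1 memb2]
      _ = (φ (P1*a*P1) + φ (P1*a*P2 + P2*a*P1) + φ (P2*a*P2)) +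
          (φ (P1*b*P1) + φ (P1*b*P2 + P2*b*P1) + φ (P2*b*P2)) := by abel
      _ = φ a + φ b := by rw [← ClaimD a, ← ClaimD b]
  refine ⟨Hadd, ?_⟩
  have hnsmul : ∀ (m : ℕ) (z : A), φ (m • z) = m • φ z := by
    intro m
    induction m with
    | zero => intro z; simpa using hzero
    | succ k ih => intro z; rw [succ_nsmul, succ_nsmul, Hadd, ih]
  intro a
  have h := B3 a
  rw [smul_add, Hadd, hnsmul, hnsmul, smul_add] at h
  have h2 := add_left_cancel h
  exact hcA' _ _ h2


section qstarlemmas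
variable {R : Type*} [Ring R] [StarRing R]

lemma foldl_jstar_ones_s9 (k : ℕ) (s : R) (hs : star s = s) :
    List.foldl jstar s (List.replicate k 1) = 2 ^ k • s := by
  induction k generalizing s with
  | zero => simp
  | succ k ih =>
    rw [List.replicate_succ, List.foldl_cons]
    have h1 : jstar s 1 = s + s := by simp [jstar, hs]
    rw [h1, ih (s + s) (by rw [star_add, hs]), pow_succ, mul_smul, two_nsmul]

lemma qstar_replicate_one (k : ℕ) (A B : R) :
    qstar (List.replicate k (1 : R) ++ [A, B]) = 2 ^ k • jstar A B := by
  cases k with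
  | zero => simp [qstar]
  | succ j =>
    rw [List.replicate_succ, List.cons_append]
    show List.foldl jstar 1 (List.replicate j (1:R) ++ [A, B]) = _
    rw [List.foldl_append, foldl_jstar_ones_s9 j (1 : R) (star_one R)]
    have h2 : jstar ((2 ^ j : ℕ) • (1 : R)) A = (2 ^ (j+1) : ℕ) • A := by
      unfold jstar
      rw [smul_mul_assoc, one_mul, star_nsmul, star_one, mul_smul_comm, mul_one, ← add_nsmul]
      congr 1
      omega
    show jstar (jstar ((2 ^ j : ℕ) • (1 : R)) A) B = _
    rw [h2, jstar_nsmul_left_s9]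

end qstarlemmas

section modulehelpers
variable {M : Type*} [AddCommGroup M] [Module ℂ M]

lemma nsmul_cancel_s9 (m : ℕ) (hm : m ≠ 0) (x y : M) (h : m • x = m • y) : x = y := by
  have h2 : (m : ℂ) • x = (m : ℂ) • y := by
    rw [Nat.cast_smul_eq_nsmul, Nat.cast_smul_eq_nsmul]; exact h
  have h3 := congrArg (fun z => ((m : ℂ))⁻¹ • z) h2
  simpa [smul_smul, inv_mul_cancel₀ (show (m:ℂ) ≠ 0 by exact_mod_cast hm)] using h3

lemma nsmul_div (m : ℕ) (hm : m ≠ 0) (x : M) : ∃ y : M, m • y = x := by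
  refine ⟨((m : ℂ))⁻¹ • x, ?_⟩
  rw [← Nat.cast_smul_eq_nsmul ℂ, smul_smul,
    mul_inv_cancel₀ (show (m:ℂ) ≠ 0 by exact_mod_cast hm), one_smul]

end modulehelpers

theorem stmt9 {𝔄 𝔄' : Type*} [CStarAlgebra 𝔄] [CStarAlgebra 𝔄']
    (n : ℕ) (hn : 2 ≤ n)
    (P₁ : 𝔄) (hproj : P₁ * P₁ = P₁) (hsa : star P₁ = P₁) (hne0 : P₁ ≠ 0) (hne1 : P₁ ≠ 1)
    (φ : 𝔄 → 𝔄') (hbij : Function.Bijective φ) (hunital : φ 1 = 1)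
    (hqI : ∀ A B : 𝔄, φ (qstar (List.replicate (n - 2) 1 ++ [A, B])) =
      qstar (List.replicate (n - 2) (φ 1) ++ [φ A, φ B]))
    (hqP : ∀ P ∈ ({P₁, 1 - P₁} : Set 𝔄), ∀ A B : 𝔄,
      φ (qstar (List.replicate (n - 2) P ++ [A, B])) =
      qstar (List.replicate (n - 2) (φ P) ++ [φ A, φ B]))
    (hspade : ∀ P ∈ ({P₁, 1 - P₁} : Set 𝔄), ∀ X : 𝔄, (∀ A : 𝔄, X * A * P = 0) → X = 0) :
    (∀ A B : 𝔄, φ (A + B) = φ A + φ B) ∧ (∀ A : 𝔄, φ (star A) = star (φ A)) := by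
  set c : ℕ := 2 ^ (n - 2) with hc
  have hcne : c ≠ 0 := by positivity
  have hR : ∀ a b : 𝔄, φ (c • jstar a b) = c • jstar (φ a) (φ b) := by
    intro a b
    have h := hqI a b
    rwa [hunital, qstar_replicate_one, qstar_replicate_one] at h
  have h2ne : (2:ℕ) ≠ 0 := by norm_num
  exact aux φ hbij.1 hbij.2 hunital P₁ (1 - P₁) (by abel) hproj hsa c hR
    (fun x y h => nsmul_cancel_s9 c hcne x y h)
    (fun x y h => nsmul_cancel_s9 c hcne x y h)
    (fun x y h => nsmul_cancel_s9 2 h2ne x y (by rw [two_nsmul, two_nsmul]; exact h))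
    (fun x => nsmul_div c hcne x)
    (hspade P₁ (Set.mem_insert _ _))
    (hspade (1 - P₁) (Set.mem_insert_of_mem _ rfl))
end
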